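/- arXiv:1101.4305 — 4 statements merged into one kernel-verified Lean document; each statement's English description precedes it below -/
import Mathlib

section
/- Let A be a K-algebra that is a domain with degree function v, C a K-subalgebra of A, δ : C → C a K-linear map with drop Δ = Δ_{δ,v}, and C' := C∖K. Suppose that: (1) Δ(ab) ≤ max{Δ(a), Δ(b)} for all a,b ∈ C; (2) Δ(aⁿ) = Δ(a) for all a ∈ C and n ≥ 1; (3) v(c) ≥ 0 for all nonzero c ∈ C and v(C'∖{0}) ≠ {0}; (4) dim_K(C_{≤i}/C_{≤i−1}) ≤ 1 for all i ≥ 0, where C_{≤i} := {c ∈ C : v(c) ≤ i}; (5) ker(δ) = K. Then Δ(a) = Δ(b) for all a, b ∈ C', i.e. δ is a linear map of constant drop. -/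
/-!
Write `deg = max v 0 ∈ ℕ` and `Δ a = deg (δ a) - deg a`; the nonconstant elements are exactly
those of positive degree. Condition (4) cancels leading terms: if `deg x = deg y` and
`Δ x < Δ y`, some `c = k • x + l • y` has smaller degree while `δ c` keeps the degree of `δ y`,
so `Δ c > Δ y`. For `x = a ^ deg b`, `y = b ^ deg a` (equal degrees, drops preserved by (2))
this shows that a drop strictly below another one forces a still larger drop.

On the other hand `Δ` is bounded above. The degrees of nonconstant elements form a subsemigroup
of `ℕ` whose indecomposable elements are pairwise incongruent modulo any of its elements, hence
finitely many. So every degree is attained by one of finitely many representatives or by a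
product, whose drop is controlled by (1), and cancelling leading terms propagates the bound to
every element of that degree. A largest drop then cannot lie above any other drop.
-/

structure IsDegreeFunction (K : Type*) {A : Type*} [Field K] [Ring A] [Algebra K A]
    (v : A → WithBot ℤ) : Prop where
  map_mul : ∀ a b : A, a ≠ 0 → b ≠ 0 → v (a * b) = v a + v b
  map_add_le : ∀ a b : A, v (a + b) ≤ max (v a) (v b)
  map_algebraMap : ∀ k : K, k ≠ 0 → v (algebraMap K A k) = 0

def natDeg {A : Type*} (v : A → WithBot ℤ) (a : A) : ℕ := (WithBot.unbotD 0 (v a)).toNat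

section natDeg

variable {A : Type*} {v : A → WithBot ℤ} {a : A}

theorem le_natDeg (v : A → WithBot ℤ) (a : A) : v a ≤ ((natDeg v a : ℤ) : WithBot ℤ) := by
  unfold natDeg
  induction v a using WithBot.recBotCoe with
  | bot => exact bot_le
  | coe m => exact WithBot.coe_le_coe.2 (by simp)

theorem coe_natDeg (h : 0 ≤ v a) : ((natDeg v a : ℤ) : WithBot ℤ) = v a := by
  unfold natDeg
  generalize v a = x at h ⊢
  induction x using WithBot.recBotCoe with
  | bot => exact absurd h (by simp)
  | coe m => simpa using WithBot.coe_le_coe.1 h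

theorem coe_natDeg_of_pos (h : 0 < natDeg v a) : ((natDeg v a : ℤ) : WithBot ℤ) = v a := by
  refine coe_natDeg ?_
  unfold natDeg at h
  generalize v a = x at h ⊢
  induction x using WithBot.recBotCoe with
  | bot => simp at h
  | coe m => exact WithBot.coe_le_coe.2 (by simp at h; omega)

theorem natDeg_lt_of_lt {n : ℕ} (h : v a < ((n : ℤ) : WithBot ℤ)) (hn : 0 < n) :
    natDeg v a < n := by
  unfold natDeg
  generalize v a = x at h ⊢
  induction x using WithBot.recBotCoe with
  | bot => simpa using hn
  | coe m => simp at h ⊢; omega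

end natDeg

namespace IsDegreeFunction

variable {K A : Type*} [Field K] [Ring A] [Algebra K A] {v : A → WithBot ℤ}

theorem map_smul (hv : IsDegreeFunction K v) {k : K} (hk : k ≠ 0) (a : A) : v (k • a) = v a := by
  rcases eq_or_ne a 0 with rfl | ha
  · rw [smul_zero]
  · have : Nontrivial A := ⟨⟨a, 0, ha⟩⟩
    rw [Algebra.smul_def, hv.map_mul _ _ ((map_ne_zero _).2 hk) ha, hv.map_algebraMap k hk,
      zero_add]

theorem map_one (hv : IsDegreeFunction K v) : v 1 = 0 := by
  simpa using hv.map_algebraMap 1 one_ne_zero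

theorem map_neg (hv : IsDegreeFunction K v) (a : A) : v (-a) = v a := by
  rw [← neg_one_smul K a, hv.map_smul (neg_ne_zero.2 one_ne_zero)]

theorem map_add_of_lt (hv : IsDegreeFunction K v) {a b : A} (h : v a < v b) : v (a + b) = v b := by
  refine le_antisymm ((hv.map_add_le a b).trans (max_le h.le le_rfl)) ?_
  have hb := hv.map_add_le (a + b) (-a)
  rw [add_neg_cancel_comm, hv.map_neg] at hb
  exact (le_max_iff.1 hb).resolve_right h.not_ge

theorem map_zero_le (hv : IsDegreeFunction K v) : v 0 ≤ 0 := by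
  have h := hv.map_add_le (algebraMap K A 1) (algebraMap K A (-1))
  rwa [← map_add, add_neg_cancel, map_zero, hv.map_algebraMap 1 one_ne_zero,
    hv.map_algebraMap (-1) (neg_ne_zero.2 one_ne_zero), max_self] at h

theorem natDeg_algebraMap (hv : IsDegreeFunction K v) (k : K) :
    natDeg v (algebraMap K A k) = 0 := by
  have h : v (algebraMap K A k) ≤ 0 := by
    rcases eq_or_ne k 0 with rfl | hk
    · rw [map_zero]; exact hv.map_zero_le
    · rw [hv.map_algebraMap k hk]
  unfold natDeg
  generalize v (algebraMap K A k) = x at h ⊢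
  induction x using WithBot.recBotCoe with
  | bot => rfl
  | coe m => simpa using WithBot.coe_le_coe.1 h

theorem natDeg_zero (hv : IsDegreeFunction K v) : natDeg v 0 = 0 := by
  simpa using hv.natDeg_algebraMap 0

theorem natDeg_smul (hv : IsDegreeFunction K v) {k : K} (hk : k ≠ 0) (a : A) :
    natDeg v (k • a) = natDeg v a := by
  rw [natDeg, hv.map_smul hk, natDeg]

theorem natDeg_add_of_lt (hv : IsDegreeFunction K v) {a b : A} (h : natDeg v a < natDeg v b) :
    natDeg v (a + b) = natDeg v b := by
  have hlt : v a < v b := by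
    rw [← coe_natDeg_of_pos (h.trans_le' (Nat.zero_le _))]
    exact (le_natDeg v a).trans_lt (by exact_mod_cast h)
  rw [natDeg, hv.map_add_of_lt hlt, natDeg]

theorem comp_val (hv : IsDegreeFunction K v) (C : Subalgebra K A) :
    IsDegreeFunction K fun c : C => v c where
  map_mul a b ha hb := hv.map_mul a b (by simpa using ha) (by simpa using hb)
  map_add_le a b := hv.map_add_le a b
  map_algebraMap k hk := hv.map_algebraMap k hk

end IsDegreeFunction

open Pointwise in
theorem AddSubsemigroup.finite_setOf_notMem_add {S : AddSubsemigroup ℕ} {n : ℕ} (hn : n ∈ S)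
    (hn0 : 0 < n) : {s | s ∈ S ∧ s ∉ (S : Set ℕ) + S}.Finite := by
  have hmul : ∀ k, 1 ≤ k → k * n ∈ S := fun k hk => by
    induction k, hk using Nat.le_induction with
    | base => simpa using hn
    | succ k _ ih => simpa [add_mul] using S.add_mem ih hn
  -- if `s < t` and `s ≡ t [MOD n]`, then `t = s + k * n` is decomposable
  have hinj : Set.InjOn (· % n) {s | s ∈ S ∧ s ∉ (S : Set ℕ) + S} := by
    suffices h : ∀ s t, s ∈ S → t ∉ (S : Set ℕ) + S → s % n = t % n → s < t → False by
      intro s hs t ht hst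
      by_contra hne
      rcases Nat.lt_or_gt_of_ne hne with hlt | hlt
      · exact h s t hs.1 ht.2 hst hlt
      · exact h t s ht.1 hs.2 hst.symm hlt
    intro s t hs ht hst hlt
    obtain ⟨k, hk⟩ := (Nat.modEq_iff_dvd' hlt.le).1 hst
    have hk1 : 1 ≤ k := Nat.pos_of_ne_zero (by rintro rfl; omega)
    exact ht (Set.mem_add.2 ⟨s, hs, k * n, hmul k hk1, by rw [mul_comm]; omega⟩)
  refine Set.Finite.of_finite_image ((Set.finite_Iio n).subset ?_) hinj
  rintro _ ⟨s, -, rfl⟩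
  exact Nat.mod_lt s hn0

structure DropHypotheses (K : Type*) {B : Type*} [Field K] [Ring B] [Algebra K B]
    (v : B → WithBot ℤ) (δ : B →ₗ[K] B) : Prop where
  isDegreeFunction : IsDegreeFunction K v
  delta_mul_le : ∀ a b : B, v (δ (a * b)) ≤ max (v (δ a) + v b) (v (δ b) + v a)
  delta_pow : ∀ (a : B) (n : ℕ), 1 ≤ n → v (δ (a ^ n)) + v a = v (δ a) + v (a ^ n)
  nonneg : ∀ c : B, c ≠ 0 → 0 ≤ v c
  exists_lt_of_le : ∀ (i : ℕ) (a b : B), v a ≤ ((i : ℤ) : WithBot ℤ) →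
    v b ≤ ((i : ℤ) : WithBot ℤ) →
    ∃ k l : K, (k ≠ 0 ∨ l ≠ 0) ∧ v (k • a + l • b) < ((i : ℤ) : WithBot ℤ)
  ker_iff : ∀ c : B, δ c = 0 ↔ c ∈ Set.range (algebraMap K B)

-- `Δ a = v (δ a) - v a` of the paper whenever `a` and `δ a` are nonzero
def drop {B : Type*} (v : B → WithBot ℤ) (δ : B → B) (a : B) : ℤ :=
  natDeg v (δ a) - natDeg v a

namespace DropHypotheses

variable {K B : Type*} [Field K] [Ring B] [Algebra K B] {v : B → WithBot ℤ} {δ : B →ₗ[K] B}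
  {x y : B}

theorem coe_natDeg (H : DropHypotheses K v δ) (hx : x ≠ 0) :
    ((natDeg v x : ℤ) : WithBot ℤ) = v x :=
  _root_.coe_natDeg (H.nonneg x hx)

theorem natDeg_eq_zero_iff (H : DropHypotheses K v δ) :
    natDeg v x = 0 ↔ x ∈ Set.range (algebraMap K B) := by
  refine ⟨fun hx => ?_, ?_⟩
  · obtain ⟨k, l, hkl, hlt⟩ := H.exists_lt_of_le 0 x 1 (by simpa [hx] using le_natDeg v x)
      (by simp [H.isDegreeFunction.map_one])
    have hzero : k • x + l • (1 : B) = 0 := by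
      by_contra hne
      exact (H.nonneg _ hne).not_gt (by simpa using hlt)
    have hk : k ≠ 0 := by
      rintro rfl
      have hl := hkl.resolve_left (not_not.2 rfl)
      rw [zero_smul, zero_add, H.isDegreeFunction.map_smul hl, H.isDegreeFunction.map_one] at hlt
      simp at hlt
    refine ⟨-(k⁻¹ * l), ?_⟩
    calc algebraMap K B (-(k⁻¹ * l)) = k⁻¹ • -(l • (1 : B)) := by
          rw [Algebra.algebraMap_eq_smul_one, smul_neg, neg_smul, smul_smul]
      _ = k⁻¹ • (k • x) := by rw [eq_neg_of_add_eq_zero_left hzero]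
      _ = x := inv_smul_smul₀ hk x
  · rintro ⟨k, rfl⟩
    exact H.isDegreeFunction.natDeg_algebraMap k

theorem natDeg_pos_iff (H : DropHypotheses K v δ) :
    0 < natDeg v x ↔ x ∉ Set.range (algebraMap K B) := by
  rw [Nat.pos_iff_ne_zero, Ne, H.natDeg_eq_zero_iff]

theorem ne_zero_of_natDeg_pos (H : DropHypotheses K v δ) (hx : 0 < natDeg v x) : x ≠ 0 := by
  rintro rfl
  simp [H.isDegreeFunction.natDeg_zero] at hx

theorem delta_ne_zero (H : DropHypotheses K v δ) (hx : 0 < natDeg v x) : δ x ≠ 0 :=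
  fun h => H.natDeg_pos_iff.1 hx ((H.ker_iff x).1 h)

theorem natDeg_mul (H : DropHypotheses K v δ) (hx : x ≠ 0) (hy : y ≠ 0) :
    natDeg v (x * y) = natDeg v x + natDeg v y := by
  have h := H.isDegreeFunction.map_mul x y hx hy
  rw [← H.coe_natDeg hx, ← H.coe_natDeg hy, ← WithBot.coe_add] at h
  rw [natDeg, h, WithBot.unbotD_coe, ← Nat.cast_add, Int.toNat_natCast]

theorem natDeg_pow (H : DropHypotheses K v δ) (hx : 0 < natDeg v x) (n : ℕ) :
    natDeg v (x ^ n) = n * natDeg v x := by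
  induction n with
  | zero => simpa using H.isDegreeFunction.natDeg_algebraMap 1
  | succ n ih =>
    have hxn : x ^ n ≠ 0 := by
      rcases n.eq_zero_or_pos with rfl | hn
      · have : Nontrivial B := ⟨⟨x, 0, H.ne_zero_of_natDeg_pos hx⟩⟩
        simp
      · exact H.ne_zero_of_natDeg_pos (by rw [ih]; positivity)
    rw [pow_succ, H.natDeg_mul hxn (H.ne_zero_of_natDeg_pos hx), ih, add_mul, one_mul]

theorem drop_mul_le (H : DropHypotheses K v δ) (hx : 0 < natDeg v x) (hy : 0 < natDeg v y) :
    drop v δ (x * y) ≤ max (drop v δ x) (drop v δ y) := by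
  have hxy := H.natDeg_mul (H.ne_zero_of_natDeg_pos hx) (H.ne_zero_of_natDeg_pos hy)
  have h := H.delta_mul_le x y
  rw [← H.coe_natDeg (H.delta_ne_zero (by omega)), ← H.coe_natDeg (H.delta_ne_zero hx),
    ← H.coe_natDeg (H.delta_ne_zero hy), ← H.coe_natDeg (H.ne_zero_of_natDeg_pos hx),
    ← H.coe_natDeg (H.ne_zero_of_natDeg_pos hy)] at h
  norm_cast at h
  unfold drop
  omega

theorem drop_pow (H : DropHypotheses K v δ) (hx : 0 < natDeg v x) {n : ℕ} (hn : 1 ≤ n) :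
    drop v δ (x ^ n) = drop v δ x := by
  have hxn := H.natDeg_pow hx n
  have hxn0 : 0 < natDeg v (x ^ n) := by rw [hxn]; positivity
  have h := H.delta_pow x n hn
  rw [← H.coe_natDeg (H.delta_ne_zero hxn0), ← H.coe_natDeg (H.delta_ne_zero hx),
    ← H.coe_natDeg (H.ne_zero_of_natDeg_pos hx), ← H.coe_natDeg (H.ne_zero_of_natDeg_pos hxn0)] at h
  norm_cast at h
  unfold drop
  rw [hxn] at h ⊢
  push_cast at h ⊢
  linarith

theorem exists_natDeg_lt (H : DropHypotheses K v δ) {n : ℕ} (hn : 0 < n) (hx : natDeg v x ≤ n)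
    (hy : natDeg v y ≤ n) : ∃ k l : K, (k ≠ 0 ∨ l ≠ 0) ∧ natDeg v (k • x + l • y) < n := by
  obtain ⟨k, l, hkl, hlt⟩ := H.exists_lt_of_le n x y
    ((le_natDeg v x).trans (by exact_mod_cast hx)) ((le_natDeg v y).trans (by exact_mod_cast hy))
  exact ⟨k, l, hkl, natDeg_lt_of_lt hlt hn⟩

theorem exists_drop_gt_of_natDeg_eq (H : DropHypotheses K v δ) (hx : 0 < natDeg v x)
    (hxy : natDeg v x = natDeg v y) (h : drop v δ x < drop v δ y) :
    ∃ c, 0 < natDeg v c ∧ natDeg v c < natDeg v y ∧ drop v δ y < drop v δ c := by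
  have hv := H.isDegreeFunction
  have hδ : natDeg v (δ x) < natDeg v (δ y) := by unfold drop at h; omega
  obtain ⟨k, l, hkl, hc⟩ := H.exists_natDeg_lt (hxy ▸ hx) hxy.le le_rfl
  have hk : k ≠ 0 := by
    rintro rfl
    rw [zero_smul, zero_add, hv.natDeg_smul (hkl.resolve_left (not_not.2 rfl))] at hc
    exact lt_irrefl _ hc
  have hl : l ≠ 0 := by
    rintro rfl
    rw [zero_smul, add_zero, hv.natDeg_smul hk, hxy] at hc
    exact lt_irrefl _ hc
  -- the leading terms of `k • x` and `l • y` cancel, those of `k • δ x` and `l • δ y` do not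
  have hδc : natDeg v (δ (k • x + l • y)) = natDeg v (δ y) := by
    rw [map_add, map_smul, map_smul, hv.natDeg_add_of_lt, hv.natDeg_smul hl]
    rwa [hv.natDeg_smul hk, hv.natDeg_smul hl]
  have hc0 : 0 < natDeg v (k • x + l • y) := by
    refine H.natDeg_pos_iff.2 fun hmem => ?_
    rw [(H.ker_iff _).2 hmem, hv.natDeg_zero] at hδc
    omega
  refine ⟨_, hc0, hc, ?_⟩
  unfold drop at h ⊢
  omega

theorem drop_le_of_natDeg_eq (H : DropHypotheses K v δ) {T : ℤ} (hx : 0 < natDeg v x)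
    (hyx : natDeg v y = natDeg v x) (hyT : drop v δ y ≤ T)
    (hT : ∀ c, 0 < natDeg v c → natDeg v c < natDeg v x → drop v δ c ≤ T) :
    drop v δ x ≤ T := by
  by_contra! hxT
  obtain ⟨c, hc0, hcx, hc⟩ :=
    H.exists_drop_gt_of_natDeg_eq (hyx ▸ hx) hyx (hyT.trans_lt hxT)
  exact (hT c hc0 hcx).not_gt (hxT.trans hc)

theorem exists_drop_gt (H : DropHypotheses K v δ) (hx : 0 < natDeg v x) (hy : 0 < natDeg v y)
    (h : drop v δ x < drop v δ y) : ∃ c, 0 < natDeg v c ∧ drop v δ y < drop v δ c := by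
  have hxy : natDeg v (x ^ natDeg v y) = natDeg v (y ^ natDeg v x) := by
    rw [H.natDeg_pow hx, H.natDeg_pow hy, mul_comm]
  obtain ⟨c, hc0, -, hc⟩ := H.exists_drop_gt_of_natDeg_eq
    (by rw [H.natDeg_pow hx]; positivity) hxy (by rwa [H.drop_pow hx hy, H.drop_pow hy hx])
  exact ⟨c, hc0, by rwa [H.drop_pow hy hx] at hc⟩

def natDegSemigroup (H : DropHypotheses K v δ) : AddSubsemigroup ℕ where
  carrier := natDeg v '' {x | 0 < natDeg v x}
  add_mem' := by
    rintro _ _ ⟨x, hx : 0 < natDeg v x, rfl⟩ ⟨y, hy : 0 < natDeg v y, rfl⟩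
    have hxy := H.natDeg_mul (H.ne_zero_of_natDeg_pos hx) (H.ne_zero_of_natDeg_pos hy)
    exact ⟨x * y, show 0 < natDeg v (x * y) by omega, hxy⟩

open Pointwise in
theorem bddAbove_drop (H : DropHypotheses K v δ) (hx : 0 < natDeg v x) :
    BddAbove (drop v δ '' {x | 0 < natDeg v x}) := by
  set S := H.natDegSemigroup
  have hF := S.finite_setOf_notMem_add ⟨x, hx, rfl⟩ hx
  have hrep : ∀ s ∈ {s | s ∈ S ∧ s ∉ (S : Set ℕ) + S}, ∃ u, 0 < natDeg v u ∧ natDeg v u = s :=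
    fun s hs => hs.1
  choose! rep hrep using hrep
  obtain ⟨T, hT⟩ := (hF.image fun s => drop v δ (rep s)).bddAbove
  refine ⟨T, ?_⟩
  suffices ∀ s y, 0 < natDeg v y → natDeg v y = s → drop v δ y ≤ T by
    rintro _ ⟨y, hy, rfl⟩
    exact this _ y hy rfl
  intro s
  induction s using Nat.strong_induction_on with
  | _ s ih =>
    rintro y hy rfl
    have hlow : ∀ c, 0 < natDeg v c → natDeg v c < natDeg v y → drop v δ c ≤ T :=
      fun c hc hcy => ih _ hcy c hc rfl
    by_cases hdec : natDeg v y ∈ (S : Set ℕ) + S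
    · obtain ⟨_, ⟨z, hz : 0 < natDeg v z, rfl⟩, _, ⟨w, hw : 0 < natDeg v w, rfl⟩, hzw⟩ :=
        Set.mem_add.1 hdec
      have hmul := H.natDeg_mul (H.ne_zero_of_natDeg_pos hz) (H.ne_zero_of_natDeg_pos hw)
      refine H.drop_le_of_natDeg_eq hy (hmul.trans hzw) ?_ hlow
      exact (H.drop_mul_le hz hw).trans (max_le (hlow z hz (by omega)) (hlow w hw (by omega)))
    · have hy' : natDeg v y ∈ {s | s ∈ S ∧ s ∉ (S : Set ℕ) + S} := ⟨⟨y, hy, rfl⟩, hdec⟩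
      exact H.drop_le_of_natDeg_eq hy (hrep _ hy').2 (hT (Set.mem_image_of_mem _ hy')) hlow

theorem drop_eq (H : DropHypotheses K v δ) (hx : 0 < natDeg v x) (hy : 0 < natDeg v y) :
    drop v δ x = drop v δ y := by
  have hbdd := H.bddAbove_drop hx
  obtain ⟨c, hc, hcM⟩ := Int.csSup_mem (Set.Nonempty.image _ ⟨x, hx⟩) hbdd
  -- a drop strictly below the largest one would produce a drop above it
  have hmax : ∀ z, 0 < natDeg v z → drop v δ z = drop v δ c := fun z hz => by
    refine le_antisymm (hcM ▸ le_csSup hbdd ⟨z, hz, rfl⟩) (not_lt.1 fun hlt => ?_)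
    obtain ⟨d, hd, hcd⟩ := H.exists_drop_gt hz hc hlt
    exact (hcM ▸ le_csSup hbdd ⟨d, hd, rfl⟩ : drop v δ d ≤ drop v δ c).not_gt hcd
  rw [hmax x hx, hmax y hy]

end DropHypotheses

theorem constant_drop_general (K A : Type*) [Field K] [Ring A] [Algebra K A]
    (v : A → WithBot ℤ)
    (hvmul : ∀ a b : A, a ≠ 0 → b ≠ 0 → v (a * b) = v a + v b)
    (hvadd : ∀ a b : A, v (a + b) ≤ max (v a) (v b))
    (hvsc : ∀ k : K, k ≠ 0 → v (algebraMap K A k) = 0)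
    (C : Subalgebra K A)
    (δ : C →ₗ[K] C)
    (h1 : ∀ a b : C,
      v (δ (a * b) : A) ≤ max (v (δ a : A) + v (b : A)) (v (δ b : A) + v (a : A)))
    (h2 : ∀ (a : C) (n : ℕ), 1 ≤ n →
      v (δ (a ^ n) : A) + v (a : A) = v (δ a : A) + v ((a : C) ^ n : A))
    (h3a : ∀ c : C, c ≠ 0 → 0 ≤ v (c : A))
    (h4 : ∀ (i : ℕ) (a b : C), v (a : A) ≤ ((i : ℤ) : WithBot ℤ) →
      v (b : A) ≤ ((i : ℤ) : WithBot ℤ) →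
      ∃ k l : K, (k ≠ 0 ∨ l ≠ 0) ∧ v ((k • a + l • b : C) : A) < ((i : ℤ) : WithBot ℤ))
    (h5 : ∀ c : C, δ c = 0 ↔ c ∈ Set.range (algebraMap K C)) :
    ∀ a b : C, a ∉ Set.range (algebraMap K C) → b ∉ Set.range (algebraMap K C) →
      v (δ a : A) + v (b : A) = v (δ b : A) + v (a : A) := by
  have H : DropHypotheses K (fun c : C => v c) δ :=
    ⟨IsDegreeFunction.comp_val ⟨hvmul, hvadd, hvsc⟩ C, h1,
      fun a n hn => by simpa using h2 a n hn, h3a, h4, h5⟩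
  intro a b ha hb
  rw [← H.natDeg_pos_iff] at ha hb
  have hab := H.drop_eq ha hb
  unfold drop at hab
  rw [← H.coe_natDeg (H.delta_ne_zero ha), ← H.coe_natDeg (H.delta_ne_zero hb),
    ← H.coe_natDeg (H.ne_zero_of_natDeg_pos ha), ← H.coe_natDeg (H.ne_zero_of_natDeg_pos hb)]
  norm_cast
  omega

/-- **Theorem 2.2.(1) (constant drop).** Let `A` be a `K`-algebra that is a domain with a
degree function `v` (`v(0) = −∞`, `v(ab) = v(a) + v(b)`, `v(a+b) ≤ max(v(a), v(b))`,
`v(λ) = 0` for `λ ∈ K*`), `C` a `K`-subalgebra of `A`, and `δ : C → C` a `K`-linear map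
with drop `Δ(a) = v(δ(a)) − v(a)`; set `C' := C ∖ K`. Assume:
1. `Δ(ab) ≤ max(Δ(a), Δ(b))` for all `a, b ∈ C` (stated additively as
   `v(δ(ab)) ≤ max(v(δa) + v(b), v(δb) + v(a))`);
2. `Δ(aⁿ) = Δ(a)` for `a ∈ C`, `n ≥ 1` (additively: `v(δ(aⁿ)) + v(a) = v(δa) + v(aⁿ)`);
3. `v(c) ≥ 0` for all nonzero `c ∈ C`, and `v(C') ≠ {0}`;
4. `dim_K(C_{≤i}/C_{≤i−1}) ≤ 1` for all `i ≥ 0` (stated as: any two elements of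
   `C_{≤i} = {c ∈ C | v(c) ≤ i}` are `K`-linearly dependent modulo `v < i`);
5. `ker δ = K`.
Then `Δ(a) = Δ(b)` for all `a, b ∈ C'`, i.e. `δ` has constant drop (stated additively as
`v(δa) + v(b) = v(δb) + v(a)`). -/
theorem constant_drop (K A : Type*) [Field K] [Ring A] [IsDomain A] [Algebra K A]
    (v : A → WithBot ℤ)
    (hv0 : v 0 = ⊥)
    (hvmul : ∀ a b : A, a ≠ 0 → b ≠ 0 → v (a * b) = v a + v b)
    (hvadd : ∀ a b : A, v (a + b) ≤ max (v a) (v b))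
    (hvsc : ∀ k : K, k ≠ 0 → v (algebraMap K A k) = 0)
    (C : Subalgebra K A)
    (δ : C →ₗ[K] C)
    (h1 : ∀ a b : C,
      v (δ (a * b) : A) ≤ max (v (δ a : A) + v (b : A)) (v (δ b : A) + v (a : A)))
    (h2 : ∀ (a : C) (n : ℕ), 1 ≤ n →
      v (δ (a ^ n) : A) + v (a : A) = v (δ a : A) + v ((a : C) ^ n : A))
    (h3a : ∀ c : C, c ≠ 0 → 0 ≤ v (c : A))
    (h3b : {m : WithBot ℤ | ∃ c : C, c ∉ Set.range (algebraMap K C) ∧ v (c : A) = m}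
      ≠ {0})
    (h4 : ∀ (i : ℕ) (a b : C), v (a : A) ≤ ((i : ℤ) : WithBot ℤ) →
      v (b : A) ≤ ((i : ℤ) : WithBot ℤ) →
      ∃ k l : K, (k ≠ 0 ∨ l ≠ 0) ∧ v ((k • a + l • b : C) : A) < ((i : ℤ) : WithBot ℤ))
    (h5 : ∀ c : C, δ c = 0 ↔ c ∈ Set.range (algebraMap K C)) :
    ∀ a b : C, a ∉ Set.range (algebraMap K C) → b ∉ Set.range (algebraMap K C) →
      v (δ a : A) + v (b : A) = v (δ b : A) + v (a : A) :=
  constant_drop_general K A v hvmul hvadd hvsc C δ h1 h2 h3a h4 h5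
end

section
/- Let A be a K-algebra that is a domain with degree function v, C a K-subalgebra of A, δ : C → C a K-linear map with drop Δ = Δ_{δ,v}, and C' := C∖K, and suppose conditions (1)–(5) hold: (1) Δ(ab) ≤ max{Δ(a), Δ(b)} for all a,b ∈ C; (2) Δ(aⁿ) = Δ(a) for all a ∈ C and n ≥ 1; (3) v(c) ≥ 0 for all nonzero c ∈ C and v(C'∖{0}) ≠ {0}; (4) dim_K(C_{≤i}/C_{≤i−1}) ≤ 1 for all i ≥ 0, where C_{≤i} := {c ∈ C : v(c) ≤ i}; (5) ker(δ) = K. Let Δ denote the common value of Δ_{δ,v} on C' and let g be the unique positive integer with ℤ·v(C'∖{0}) = ℤg. Then δ is a Fredholm linear map of C with index ind(δ) = −Δ/g and dim_K(coker(δ)) = Δ/g + 1. -/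
namespace DropAux

structure DegData (K A : Type*) [Field K] [Ring A] [IsDomain A] [Algebra K A] where
  v : A → WithBot ℤ
  C : Subalgebra K A
  δ : C →ₗ[K] C
  hv0 : v 0 = ⊥
  hvmul : ∀ a b : A, a ≠ 0 → b ≠ 0 → v (a * b) = v a + v b
  hvadd : ∀ a b : A, v (a + b) ≤ max (v a) (v b)
  hvsc : ∀ k : K, k ≠ 0 → v (algebraMap K A k) = 0
  h3a : ∀ c : C, c ≠ 0 → 0 ≤ v (c : A)
  h4 : ∀ (i : ℕ) (a b : C), v (a : A) ≤ ((i : ℤ) : WithBot ℤ) →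
      v (b : A) ≤ ((i : ℤ) : WithBot ℤ) →
      ∃ k l : K, (k ≠ 0 ∨ l ≠ 0) ∧ v ((k • a + l • b : C) : A) < ((i : ℤ) : WithBot ℤ)
  h5 : ∀ c : C, δ c = 0 ↔ c ∈ Set.range (algebraMap K C)
  g : ℤ
  hg : 0 < g
  hgZ : AddSubgroup.closure
      {n : ℤ | ∃ c : C, c ∉ Set.range (algebraMap K C) ∧ v (c : A) = (n : WithBot ℤ)}
    = AddSubgroup.zmultiples g
  D : ℤ
  hD : ∀ a : C, a ∉ Set.range (algebraMap K C) →
      v (δ a : A) = v (a : A) + (D : WithBot ℤ)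

namespace DegData

variable {K A : Type*} [Field K] [Ring A] [IsDomain A] [Algebra K A] (E : DegData K A)

/-- The value set -/
def S : Set ℤ :=
  {n : ℤ | ∃ c : E.C, c ∉ Set.range (algebraMap K E.C) ∧ E.v (c : A) = (n : WithBot ℤ)}

lemma coe_ne_zero {c : E.C} (h : c ≠ 0) : (c : A) ≠ 0 := by
  intro h0; exact h (Subtype.ext h0)

lemma v_one : E.v ((1 : E.C) : A) = 0 := by
  simpa using E.hvsc 1 one_ne_zero

lemma one_ne_zero' : (1 : E.C) ≠ 0 := by
  intro h
  have : ((1 : E.C) : A) = 0 := by exact_mod_cast congrArg Subtype.val h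
  simp at this

lemma v_range {c : E.C} (hc : c ∈ Set.range (algebraMap K E.C)) (h0 : c ≠ 0) :
    E.v (c : A) = 0 := by
  obtain ⟨k, rfl⟩ := hc
  have hk : k ≠ 0 := by rintro rfl; simp at h0
  have : ((algebraMap K E.C k : E.C) : A) = algebraMap K A k := rfl
  rw [this]; exact E.hvsc k hk

lemma v_smul {k : K} (hk : k ≠ 0) (c : E.C) : E.v ((k • c : E.C) : A) = E.v (c : A) := by
  by_cases hc : c = 0
  · subst hc; simp
  have h1 : ((k • c : E.C) : A) = algebraMap K A k * (c : A) := by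
    simp [Algebra.smul_def]
  have hk' : algebraMap K A k ≠ 0 := by
    intro h0
    have := E.hvsc k hk
    rw [h0, E.hv0] at this
    exact absurd this (by simp)
  rw [h1, E.hvmul _ _ hk' (E.coe_ne_zero hc), E.hvsc k hk, zero_add]


lemma exists_v_int {c : E.C} (hc : c ≠ 0) : ∃ n : ℤ, 0 ≤ n ∧ E.v (c : A) = (n : WithBot ℤ) := by
  have h := E.h3a c hc
  cases hv : E.v (c : A) with
  | bot => rw [hv] at h; exact absurd h (by simp)
  | coe n =>
    refine ⟨n, ?_, rfl⟩
    rw [hv] at h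
    exact_mod_cast h

lemma algebraMap_eq_smul_one (k : K) : algebraMap K E.C k = k • (1 : E.C) :=
  Algebra.algebraMap_eq_smul_one k

/-- v = 0 implies scalar -/
lemma mem_range_of_v_eq_zero {c : E.C} (hc : c ≠ 0) (hv : E.v (c : A) = 0) :
    c ∈ Set.range (algebraMap K E.C) := by
  obtain ⟨k, l, hne, hlt⟩ := E.h4 0 c 1 (by rw [hv]; simp) (by rw [E.v_one]; simp)
  have hz : (k • c + l • 1 : E.C) = 0 := by
    by_contra h0
    have := E.h3a _ h0
    have hlt' : E.v ((k • c + l • 1 : E.C) : A) < (0 : WithBot ℤ) := by exact_mod_cast hlt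
    exact absurd (lt_of_le_of_lt this hlt') (by simp)
  have hk : k ≠ 0 := by
    rintro rfl
    simp only [zero_smul, zero_add] at hz
    rcases hne with h | h
    · exact h rfl
    · exact h (by
        have := congrArg (fun x => l⁻¹ • x) hz
        simpa [smul_smul, inv_mul_cancel₀ h] using (smul_eq_zero.mp hz).resolve_right E.one_ne_zero')
  refine ⟨-(k⁻¹ * l), ?_⟩
  rw [E.algebraMap_eq_smul_one]
  have : k • c = -(l • (1:E.C)) := by linear_combination (norm := module) hz
  calc (-(k⁻¹ * l)) • (1 : E.C) = k⁻¹ • -(l • (1:E.C)) := by module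
  _ = k⁻¹ • (k • c) := by rw [← this]
  _ = c := by rw [smul_smul, inv_mul_cancel₀ hk, one_smul]

lemma not_range_of_v_pos {c : E.C} {n : ℤ} (hn : 0 < n) (hv : E.v (c : A) = (n : WithBot ℤ)) :
    c ∉ Set.range (algebraMap K E.C) := by
  intro hr
  have hc : c ≠ 0 := by
    rintro rfl
    rw [ZeroMemClass.coe_zero, E.hv0] at hv
    exact absurd hv.symm (by simp)
  rw [E.v_range hr hc] at hv
  have : (0:ℤ) = n := by exact_mod_cast hv
  omega

lemma S_pos {n : ℤ} (hn : n ∈ E.S) : 0 < n := by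
  obtain ⟨c, hcr, hcv⟩ := hn
  have hc : c ≠ 0 := by
    rintro rfl; exact hcr ⟨0, by simp⟩
  obtain ⟨m, hm, hmv⟩ := E.exists_v_int hc
  rw [hmv] at hcv
  have hmn : m = n := by exact_mod_cast hcv
  subst hmn
  rcases hm.lt_or_eq with h | h
  · exact h
  · exact absurd (E.mem_range_of_v_eq_zero hc (by rw [hmv, ← h]; exact_mod_cast rfl)) hcr

lemma S_add {m n : ℤ} (hm : m ∈ E.S) (hn : n ∈ E.S) : m + n ∈ E.S := by
  obtain ⟨c, hcr, hcv⟩ := hm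
  obtain ⟨d, hdr, hdv⟩ := hn
  have hc : c ≠ 0 := by rintro rfl; exact hcr ⟨0, by simp⟩
  have hd : d ≠ 0 := by rintro rfl; exact hdr ⟨0, by simp⟩
  have hcd : ((c * d : E.C) : A) = (c : A) * (d : A) := rfl
  have hv : E.v ((c * d : E.C) : A) = ((m + n : ℤ) : WithBot ℤ) := by
    rw [hcd, E.hvmul _ _ (E.coe_ne_zero hc) (E.coe_ne_zero hd), hcv, hdv]
    push_cast; rfl
  exact ⟨c * d, E.not_range_of_v_pos (by have := E.S_pos ⟨c, hcr, hcv⟩; have := E.S_pos ⟨d, hdr, hdv⟩; omega) hv, hv⟩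


lemma hgZ' : AddSubgroup.closure E.S = AddSubgroup.zmultiples E.g := E.hgZ

lemma S_dvd {n : ℤ} (hn : n ∈ E.S) : E.g ∣ n := by
  have h1 : n ∈ AddSubgroup.closure E.S := AddSubgroup.subset_closure hn
  rw [show E.S = {n : ℤ | ∃ c : E.C, c ∉ Set.range (algebraMap K E.C) ∧ E.v (c : A) = (n : WithBot ℤ)} from rfl, E.hgZ] at h1
  obtain ⟨k, hk⟩ := AddSubgroup.mem_zmultiples_iff.mp h1
  exact ⟨k, by rw [← hk]; rw [smul_eq_mul]; ring⟩

lemma S_nonempty : E.S.Nonempty := by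
  by_contra h
  rw [Set.not_nonempty_iff_eq_empty] at h
  have h1 : E.g ∈ AddSubgroup.closure E.S := by
    rw [show (AddSubgroup.closure E.S) = AddSubgroup.zmultiples E.g from E.hgZ]
    exact AddSubgroup.mem_zmultiples E.g
  rw [h, AddSubgroup.closure_empty] at h1
  exact absurd (by simpa using h1) E.hg.ne'

lemma delta_ne_zero {c : E.C} (hc : c ∉ Set.range (algebraMap K E.C)) : E.δ c ≠ 0 := by
  intro h; exact hc ((E.h5 c).mp h)

lemma v_delta {c : E.C} {n : ℤ} (hc : c ∉ Set.range (algebraMap K E.C))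
    (hv : E.v (c : A) = (n : WithBot ℤ)) :
    E.v ((E.δ c : E.C) : A) = ((n + E.D : ℤ) : WithBot ℤ) := by
  rw [E.hD c hc, hv]; push_cast; rfl

lemma g_dvd_D : E.g ∣ E.D := by
  obtain ⟨s, c, hcr, hcv⟩ := E.S_nonempty
  have hsd := E.S_dvd ⟨c, hcr, hcv⟩
  have hδ := E.v_delta hcr hcv
  by_cases h : E.δ c ∈ Set.range (algebraMap K E.C)
  · have h0 : E.v ((E.δ c : E.C) : A) = 0 := E.v_range h (E.delta_ne_zero hcr)
    rw [h0] at hδ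
    have : (0:ℤ) = s + E.D := by exact_mod_cast hδ
    obtain ⟨k, hk⟩ := hsd
    exact ⟨-k, by rw [mul_neg, ← hk]; omega⟩
  · have : s + E.D ∈ E.S := ⟨E.δ c, h, hδ⟩
    obtain ⟨k, hk⟩ := E.S_dvd this
    obtain ⟨k', hk'⟩ := hsd
    exact ⟨k - k', by rw [mul_sub]; omega⟩

/-- all large multiples of g are in S -/
lemma exists_B : ∃ B : ℤ, 0 ≤ B ∧ ∀ N : ℤ, B ≤ N → N * E.g ∈ E.S := by
  classical
  -- the monoid closure of S is contained in {0} ∪ S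
  set M := AddSubmonoid.closure E.S with hM
  have hMsub : ∀ x ∈ M, x = 0 ∨ x ∈ E.S := by
    set T : AddSubmonoid ℤ := {
      carrier := ({0} ∪ E.S : Set ℤ)
      zero_mem' := Or.inl rfl
      add_mem' := by
        intro a b ha hb
        rcases ha with ha | ha <;> rcases hb with hb | hb
        · simp only [Set.mem_singleton_iff] at ha hb; left; simp [ha, hb]
        · simp only [Set.mem_singleton_iff] at ha; right; simpa [ha] using hb
        · simp only [Set.mem_singleton_iff] at hb; right; simpa [hb] using ha
        · right; exact E.S_add ha hb } with hT
    intro x hx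
    have hle : M ≤ T := AddSubmonoid.closure_le.mpr (fun s hs => Or.inr hs)
    rcases hle hx with h | h
    · left; simpa using h
    · right; exact h
  -- g is a difference of two elements of M
  have hgdiff : ∃ a ∈ M, ∃ b ∈ M, a - b = E.g := by
    set G : AddSubgroup ℤ := {
      carrier := {x | ∃ a ∈ M, ∃ b ∈ M, a - b = x}
      zero_mem' := ⟨0, zero_mem M, 0, zero_mem M, by ring⟩
      add_mem' := by
        rintro x y ⟨a, ha, b, hb, rfl⟩ ⟨a', ha', b', hb', rfl⟩
        exact ⟨a + a', add_mem ha ha', b + b', add_mem hb hb', by ring⟩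
      neg_mem' := by
        rintro x ⟨a, ha, b, hb, rfl⟩
        exact ⟨b, hb, a, ha, by ring⟩ } with hGdef
    have hle : AddSubgroup.closure E.S ≤ G := by
      rw [AddSubgroup.closure_le]
      intro s hs
      exact ⟨s, AddSubmonoid.subset_closure hs, 0, zero_mem M, by ring⟩
    have : E.g ∈ G := hle (by rw [E.hgZ']; exact AddSubgroup.mem_zmultiples E.g)
    exact this
  obtain ⟨a, ha, b, hb, hab⟩ := hgdiff
  -- membership of positive monoid-closure elements in S
  have hposS : ∀ x ∈ M, 0 < x → x ∈ E.S := by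
    intro x hx hpos
    rcases hMsub x hx with h | h
    · omega
    · exact h
  have hsmul : ∀ (x : ℕ) (s : ℤ), s ∈ M → (x : ℤ) * s ∈ M := by
    intro x s hs
    have := nsmul_mem hs x
    simpa [nsmul_eq_mul] using this
  rcases hMsub b hb with hb0 | hbS
  · -- b = 0, so g ∈ M; all positive multiples of g work
    subst hb0
    refine ⟨1, by norm_num, fun N hN => ?_⟩
    have hag : a = E.g := by omega
    have h1 : (N.toNat : ℤ) * a ∈ M := hsmul N.toNat a ha
    have hNt : (N.toNat : ℤ) = N := Int.toNat_of_nonneg (by omega)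
    rw [hNt, hag] at h1
    exact hposS _ h1 (by nlinarith [E.hg])
  · -- b ∈ S : b = β * g with β ≥ 1
    obtain ⟨β, hβ⟩ := E.S_dvd hbS
    have hbpos := E.S_pos hbS
    have hβpos : 0 < β := by nlinarith [E.hg]
    refine ⟨β * β, by positivity, fun N hN => ?_⟩
    set q := N / β with hq
    set r := N % β with hr
    have hqr : β * q + r = N := Int.mul_ediv_add_emod N β
    have hr0 : 0 ≤ r := Int.emod_nonneg N (by omega)
    have hrβ : r < β := Int.emod_lt_of_pos N hβpos
    have hqβ : β ≤ q := Int.le_ediv_iff_mul_le hβpos |>.mpr (by nlinarith)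
    -- N * g = (q - r) * b + r * (b + g)
    have haM : a ∈ M := ha
    have hbM : b ∈ M := hb
    have h1 : ((q - r).toNat : ℤ) * b ∈ M := hsmul _ _ hbM
    have h2 : ((r).toNat : ℤ) * a ∈ M := hsmul _ _ haM
    have ht1 : ((q - r).toNat : ℤ) = q - r := Int.toNat_of_nonneg (by omega)
    have ht2 : ((r).toNat : ℤ) = r := Int.toNat_of_nonneg hr0
    rw [ht1] at h1; rw [ht2] at h2
    have hsum : (q - r) * b + r * a ∈ M := add_mem h1 h2
    have heq : (q - r) * b + r * a = N * E.g := by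
      have : a = b + E.g := by omega
      rw [this, hβ]
      nlinarith [hqr]
    rw [heq] at hsum
    exact hposS _ hsum (by nlinarith [E.hg])


/-- The filtration -/
def V (i : ℤ) : Submodule K E.C where
  carrier := {c : E.C | E.v (c : A) ≤ (i : WithBot ℤ)}
  zero_mem' := by
    show E.v ((0 : E.C) : A) ≤ _
    rw [ZeroMemClass.coe_zero, E.hv0]; exact bot_le
  add_mem' := by
    intro a b ha hb
    show E.v ((a + b : E.C) : A) ≤ _
    have hab : ((a + b : E.C) : A) = (a : A) + (b : A) := rfl
    rw [hab]
    exact le_trans (E.hvadd _ _) (max_le ha hb)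
  smul_mem' := by
    intro k c hc
    show E.v ((k • c : E.C) : A) ≤ _
    by_cases hk : k = 0
    · subst hk
      rw [zero_smul, ZeroMemClass.coe_zero, E.hv0]; exact bot_le
    · rw [E.v_smul hk]; exact hc

lemma mem_V {i : ℤ} {c : E.C} : c ∈ E.V i ↔ E.v (c : A) ≤ (i : WithBot ℤ) := Iff.rfl

lemma V_mono {i j : ℤ} (h : i ≤ j) : E.V i ≤ E.V j := by
  intro c hc
  rw [mem_V] at hc ⊢
  exact le_trans hc (by exact_mod_cast h)

lemma one_mem_V {i : ℤ} (h : 0 ≤ i) : (1 : E.C) ∈ E.V i := by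
  rw [mem_V, E.v_one]
  exact_mod_cast WithBot.coe_le_coe.mpr h

lemma V_neg {i : ℤ} (h : i < 0) : E.V i = ⊥ := by
  rw [eq_bot_iff]
  intro c hc
  by_contra h0
  have h1 : c ≠ 0 := by simpa using h0
  obtain ⟨n, hn, hnv⟩ := E.exists_v_int h1
  rw [mem_V, hnv] at hc
  have : n ≤ i := by exact_mod_cast hc
  omega

lemma lt_coe_le_sub_one {x : WithBot ℤ} {n : ℤ} (h : x < (n : WithBot ℤ)) :
    x ≤ ((n - 1 : ℤ) : WithBot ℤ) := by
  cases x with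
  | bot => exact bot_le
  | coe m => exact_mod_cast Int.le_sub_one_of_lt (by exact_mod_cast h)

lemma V_succ_notMem {t : ℤ} (ht : 1 ≤ t) (hS : t ∉ E.S) : E.V t = E.V (t - 1) := by
  refine le_antisymm ?_ (E.V_mono (by omega))
  intro c hc
  by_cases h0 : c = 0
  · subst h0; exact zero_mem _
  obtain ⟨n, hn, hnv⟩ := E.exists_v_int h0
  rw [mem_V, hnv] at hc ⊢
  have hnt : n ≤ t := by exact_mod_cast hc
  by_cases hrange : c ∈ Set.range (algebraMap K E.C)
  · have := E.v_range hrange h0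
    rw [this] at hnv
    have : n = 0 := by exact_mod_cast hnv.symm
    exact_mod_cast WithBot.coe_le_coe.mpr (by omega)
  · have hnS : n ∈ E.S := ⟨c, hrange, hnv⟩
    have : n ≠ t := fun h => hS (h ▸ hnS)
    exact_mod_cast WithBot.coe_le_coe.mpr (by omega)

lemma V_succ_mem {t : ℤ} (ht : 1 ≤ t) (hS : t ∈ E.S) :
    ∃ c : E.C, E.v (c : A) = (t : WithBot ℤ) ∧ c ∉ E.V (t - 1) ∧
      E.V t = E.V (t - 1) ⊔ Submodule.span K {c} := by
  obtain ⟨c, hcr, hcv⟩ := hS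
  have hcV : c ∉ E.V (t - 1) := by
    rw [mem_V, hcv]
    intro h
    have : t ≤ t - 1 := by exact_mod_cast h
    omega
  refine ⟨c, hcv, hcV, le_antisymm ?_ (sup_le (E.V_mono (by omega)) ?_)⟩
  · intro b hb
    have htn : ((t.toNat : ℤ) : WithBot ℤ) = (t : WithBot ℤ) :=
      congrArg (fun z : ℤ => (z : WithBot ℤ)) (Int.toNat_of_nonneg (by omega))
    obtain ⟨k, l, hne, hlt⟩ := E.h4 t.toNat c b (by rw [hcv, htn]) (by rw [htn]; exact hb)
    rw [htn] at hlt
    have hl : l ≠ 0 := by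
      rintro rfl
      rcases hne with hk | h
      · rw [zero_smul, add_zero] at hlt
        rw [E.v_smul hk, hcv] at hlt
        exact absurd hlt (lt_irrefl _)
      · exact h rfl
    have hmem : (k • c + l • b : E.C) ∈ E.V (t - 1) := E.mem_V.mpr (lt_coe_le_sub_one hlt)
    have hbe : b = l⁻¹ • ((k • c + l • b : E.C)) - (l⁻¹ * k) • c := by
      rw [smul_add, smul_smul, smul_smul, inv_mul_cancel₀ hl, one_smul]
      abel
    rw [hbe]
    apply Submodule.sub_mem
    · exact Submodule.mem_sup_left (Submodule.smul_mem _ _ hmem)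
    · exact Submodule.mem_sup_right (Submodule.smul_mem _ _ (Submodule.mem_span_singleton_self c))
  · rw [Submodule.span_le, Set.singleton_subset_iff]
    rw [SetLike.mem_coe, mem_V, hcv]

lemma fd_V : ∀ i : ℤ, FiniteDimensional K (E.V i) := by
  classical
  have hnat : ∀ n : ℕ, FiniteDimensional K (E.V n) := by
    intro n
    induction n with
    | zero =>
      have h0 : E.V 0 ≤ Submodule.span K {(1 : E.C)} := by
        intro c hc
        by_cases h0 : c = 0
        · subst h0; exact zero_mem _
        obtain ⟨n, hn, hnv⟩ := E.exists_v_int h0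
        rw [mem_V, hnv] at hc
        have : n ≤ 0 := by exact_mod_cast hc
        have hn0 : n = 0 := le_antisymm this hn
        obtain ⟨k, hk⟩ := E.mem_range_of_v_eq_zero h0 (by rw [hnv, hn0]; exact_mod_cast rfl)
        rw [← hk, E.algebraMap_eq_smul_one]
        exact Submodule.smul_mem _ _ (Submodule.mem_span_singleton_self _)
      have : FiniteDimensional K (Submodule.span K {(1 : E.C)}) := by infer_instance
      exact Submodule.finiteDimensional_of_le h0
    | succ n ih =>
      have ht : (1 : ℤ) ≤ (n + 1 : ℕ) := by exact_mod_cast Nat.succ_le_succ (Nat.zero_le n)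
      by_cases hS : ((n + 1 : ℕ) : ℤ) ∈ E.S
      · obtain ⟨c, hcv, hcV, hVeq⟩ := E.V_succ_mem ht hS
        rw [hVeq]
        have hn1 : ((n + 1 : ℕ) : ℤ) - 1 = (n : ℤ) := by push_cast; ring
        rw [hn1]
        infer_instance
      · rw [E.V_succ_notMem ht hS]
        have hn1 : ((n + 1 : ℕ) : ℤ) - 1 = (n : ℤ) := by push_cast; ring
        rw [hn1]
        exact ih
  intro i
  by_cases h : i < 0
  · rw [E.V_neg h]; infer_instance
  · have : ((i.toNat : ℕ) : ℤ) = i := Int.toNat_of_nonneg (by omega)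
    rw [← this]
    exact hnat i.toNat

lemma rank_succ {t : ℤ} (ht : 1 ≤ t) (hS : t ∈ E.S) :
    Module.finrank K (E.V t) = Module.finrank K (E.V (t - 1)) + 1 := by
  obtain ⟨c, hcv, hcV, hVeq⟩ := E.V_succ_mem ht hS
  have hc0 : c ≠ 0 := by
    rintro rfl
    rw [ZeroMemClass.coe_zero, E.hv0] at hcv
    exact absurd hcv.symm (by simp)
  have hfd1 : FiniteDimensional K (E.V (t - 1)) := E.fd_V _
  have hfd2 : FiniteDimensional K (Submodule.span K {c}) := by infer_instance
  have hinf : E.V (t - 1) ⊓ Submodule.span K {c} = ⊥ := by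
    rw [eq_bot_iff]
    rintro x ⟨hx1, hx2⟩
    obtain ⟨a, rfl⟩ := Submodule.mem_span_singleton.mp hx2
    by_cases ha : a = 0
    · subst ha; rw [zero_smul]; exact zero_mem _
    · exfalso
      apply hcV
      have := Submodule.smul_mem (E.V (t-1)) a⁻¹ hx1
      rwa [smul_smul, inv_mul_cancel₀ ha, one_smul] at this
  have hsum := Submodule.finrank_sup_add_finrank_inf_eq (E.V (t - 1)) (Submodule.span K {c})
  rw [hinf] at hsum
  simp only [finrank_bot, add_zero] at hsum
  rw [hVeq, hsum, finrank_span_singleton hc0]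


lemma V_gap (M : ℤ) (hM : 0 ≤ M) : ∀ k : ℕ, (k : ℤ) < E.g → E.V (M * E.g + k) = E.V (M * E.g) := by
  intro k
  induction k with
  | zero => intro _; norm_num
  | succ k ih =>
    intro hk
    have hk' : (k : ℤ) < E.g := by push_cast at hk ⊢; omega
    have hMg : 0 ≤ M * E.g := mul_nonneg hM E.hg.le
    have ht : (1:ℤ) ≤ M * E.g + (k+1 : ℕ) := by push_cast; omega
    have hnS : (M * E.g + (k+1 : ℕ) : ℤ) ∉ E.S := by
      intro hS
      obtain ⟨m, hm⟩ := E.S_dvd hS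
      have h1 : E.g ∣ ((k+1 : ℕ) : ℤ) := ⟨m - M, by push_cast at hm ⊢; linarith [hm]⟩
      have h2 : (0:ℤ) < ((k+1:ℕ):ℤ) := by exact_mod_cast Nat.succ_pos k
      have := Int.le_of_dvd h2 h1
      push_cast at this hk
      omega
    rw [E.V_succ_notMem ht hnS]
    have he : M * E.g + ((k+1:ℕ):ℤ) - 1 = M * E.g + (k : ℕ) := by push_cast; ring
    rw [he, ih hk']

lemma rank_mult (M : ℤ) (hM : 0 ≤ M) (hS : (M + 1) * E.g ∈ E.S) :
    Module.finrank K (E.V ((M + 1) * E.g)) = Module.finrank K (E.V (M * E.g)) + 1 := by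
  have hg := E.hg
  have ht : (1:ℤ) ≤ (M + 1) * E.g := by nlinarith
  rw [E.rank_succ ht hS]
  have hk : (((E.g - 1).toNat : ℕ) : ℤ) = E.g - 1 := Int.toNat_of_nonneg (by omega)
  have hgap := E.V_gap M hM (E.g - 1).toNat (by rw [hk]; omega)
  have h2 : (M + 1) * E.g - 1 = M * E.g + (((E.g - 1).toNat : ℕ) : ℤ) := by rw [hk]; ring
  rw [h2, hgap]

lemma rank_lin (B : ℤ) (hB0 : 0 ≤ B) (hB : ∀ N : ℤ, B ≤ N → N * E.g ∈ E.S) :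
    ∀ n : ℕ, Module.finrank K (E.V ((B + n) * E.g)) = Module.finrank K (E.V (B * E.g)) + n := by
  intro n
  induction n with
  | zero =>
    have h0 : ((B + ((0:ℕ):ℤ)) * E.g) = B * E.g := by push_cast; ring
    rw [h0]; simp
  | succ n ih =>
    have h1 : ((B + (n+1:ℕ)) : ℤ) = (B + (n:ℕ)) + 1 := by push_cast; ring
    rw [h1, E.rank_mult (B + n) (by have := Int.ofNat_nonneg n; omega) (by rw [← h1]; exact hB _ (by push_cast; omega)), ih]
    ring

lemma ker_delta : LinearMap.ker E.δ = Submodule.span K {(1 : E.C)} := by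
  ext c
  rw [LinearMap.mem_ker, E.h5 c, Submodule.mem_span_singleton]
  constructor
  · rintro ⟨k, rfl⟩; exact ⟨k, (E.algebraMap_eq_smul_one k).symm⟩
  · rintro ⟨k, rfl⟩; exact ⟨k, E.algebraMap_eq_smul_one k⟩

lemma rank_ker : Module.finrank K (LinearMap.ker E.δ) = 1 := by
  rw [E.ker_delta, finrank_span_singleton E.one_ne_zero']

lemma fd_ker : FiniteDimensional K (LinearMap.ker E.δ) := by
  rw [E.ker_delta]; infer_instance

lemma map_V {i j : ℤ} (hij : j = i + E.D) (hi : 0 ≤ i) :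
    Submodule.map E.δ (E.V i) = LinearMap.range E.δ ⊓ E.V j := by
  apply le_antisymm
  · intro x hx
    obtain ⟨c, hc, rfl⟩ := Submodule.mem_map.mp hx
    rw [Submodule.mem_inf]
    refine ⟨LinearMap.mem_range_self _ _, ?_⟩
    by_cases hcr : c ∈ Set.range (algebraMap K E.C)
    · rw [mem_V, (E.h5 c).mpr hcr, ZeroMemClass.coe_zero, E.hv0]
      exact bot_le
    · have hc0 : c ≠ 0 := by rintro rfl; exact hcr ⟨0, by simp⟩
      obtain ⟨n, hn, hnv⟩ := E.exists_v_int hc0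
      rw [mem_V, E.v_delta hcr hnv, hij]
      rw [mem_V, hnv] at hc
      have : n ≤ i := by exact_mod_cast hc
      exact_mod_cast WithBot.coe_le_coe.mpr (by omega)
  · intro x hx
    obtain ⟨hr, hxV⟩ := Submodule.mem_inf.mp hx
    obtain ⟨c, rfl⟩ := hr
    rw [Submodule.mem_map]
    by_cases hcr : c ∈ Set.range (algebraMap K E.C)
    · exact ⟨0, zero_mem _, by rw [map_zero, (E.h5 c).mpr hcr]⟩
    · have hc0 : c ≠ 0 := by rintro rfl; exact hcr ⟨0, by simp⟩
      obtain ⟨n, hn, hnv⟩ := E.exists_v_int hc0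
      refine ⟨c, ?_, rfl⟩
      rw [mem_V, E.v_delta hcr hnv, hij] at hxV
      have : n + E.D ≤ i + E.D := by exact_mod_cast hxV
      rw [mem_V, hnv]
      exact_mod_cast WithBot.coe_le_coe.mpr (by omega)

set_option synthInstance.maxHeartbeats 1000000 in
lemma rank_map {i : ℤ} (hi : 0 ≤ i) :
    Module.finrank K (E.V i) = Module.finrank K (Submodule.map E.δ (E.V i)) + 1 := by
  have hfd : FiniteDimensional K (E.V i) := E.fd_V i
  set φ : E.V i →ₗ[K] E.C := E.δ ∘ₗ (E.V i).subtype with hφ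
  have hrange : LinearMap.range φ = Submodule.map E.δ (E.V i) := by
    rw [hφ, LinearMap.range_comp, Submodule.range_subtype]
  have hker : LinearMap.ker φ = Submodule.comap (E.V i).subtype (LinearMap.ker E.δ) := by
    rw [hφ, LinearMap.ker_comp]
  have hle : LinearMap.ker E.δ ≤ E.V i := by
    rw [E.ker_delta, Submodule.span_le, Set.singleton_subset_iff]
    exact E.one_mem_V hi
  have hkerrank : Module.finrank K (LinearMap.ker φ) = 1 := by
    rw [hker, (Submodule.comapSubtypeEquivOfLe hle).finrank_eq, E.rank_ker]
  have := LinearMap.finrank_range_add_finrank_ker φ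
  rw [hrange, hkerrank] at this
  omega

lemma sup_top {j : ℤ} (hj : 0 ≤ j)
    (hclose : ∀ s ∈ E.S, j < s → s - E.D ∈ E.S) :
    E.V j ⊔ LinearMap.range E.δ = ⊤ := by
  set J := E.V j ⊔ LinearMap.range E.δ with hJ
  have key : ∀ n : ℕ, E.V (j + n) ≤ J := by
    intro n
    induction n with
    | zero =>
      have h0 : j + ((0:ℕ):ℤ) = j := by push_cast; ring
      rw [h0]; exact le_sup_left
    | succ n ih =>
      intro c hc
      by_cases hle : c ∈ E.V (j + n)
      · exact ih hle
      have hc0 : c ≠ 0 := by rintro rfl; exact hle (zero_mem _)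
      obtain ⟨m, hm0, hmv⟩ := E.exists_v_int hc0
      rw [mem_V, hmv] at hc hle
      have hm1 : m ≤ j + (n+1:ℕ) := by exact_mod_cast hc
      have hm2 : ¬ (m ≤ j + (n:ℕ)) := fun h => hle (by exact_mod_cast WithBot.coe_le_coe.mpr h)
      have hms : m = j + (n:ℕ) + 1 := by push_cast at hm1 hm2 ⊢; omega
      have hcr : c ∉ Set.range (algebraMap K E.C) := by
        intro hr
        have h0 := E.v_range hr hc0
        rw [h0] at hmv
        have : m = 0 := by exact_mod_cast hmv.symm
        omega
      have hmS : m ∈ E.S := ⟨c, hcr, hmv⟩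
      obtain ⟨c', hcr', hc'v⟩ := hclose m hmS (by omega)
      have hδv : E.v ((E.δ c' : E.C) : A) = (m : WithBot ℤ) := by
        rw [E.v_delta hcr' hc'v]
        congr 1
        ring
      have hmnn : 0 ≤ m := by omega
      have htn : ((m.toNat : ℤ) : WithBot ℤ) = (m : WithBot ℤ) :=
        congrArg (fun z : ℤ => (z : WithBot ℤ)) (Int.toNat_of_nonneg hmnn)
      obtain ⟨k, l, hne, hlt⟩ := E.h4 m.toNat (E.δ c') c (by rw [hδv, htn]) (by rw [hmv, htn])
      rw [htn] at hlt
      have hl : l ≠ 0 := by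
        rintro rfl
        rcases hne with hk | h
        · rw [zero_smul, add_zero, E.v_smul hk, hδv] at hlt
          exact absurd hlt (lt_irrefl _)
        · exact h rfl
      have hmem : (k • E.δ c' + l • c : E.C) ∈ E.V (j + n) := by
        rw [mem_V]
        have := lt_coe_le_sub_one hlt
        have he : m - 1 = j + (n:ℕ) := by omega
        rwa [he] at this
      have hbe : c = l⁻¹ • ((k • E.δ c' + l • c : E.C)) - (l⁻¹ * k) • E.δ c' := by
        rw [smul_add, smul_smul, smul_smul, inv_mul_cancel₀ hl, one_smul]
        abel
      rw [hbe]
      apply Submodule.sub_mem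
      · exact ih (Submodule.smul_mem _ _ hmem)
      · apply le_sup_right (α := Submodule K E.C)
        rw [← map_smul]
        exact LinearMap.mem_range_self _ _
  rw [eq_top_iff]
  intro c _
  by_cases hc0 : c = 0
  · subst hc0; exact zero_mem _
  obtain ⟨m, hm0, hmv⟩ := E.exists_v_int hc0
  have : c ∈ E.V (j + m.toNat) := by
    rw [mem_V, hmv]
    have : m ≤ j + m.toNat := by omega
    exact_mod_cast WithBot.coe_le_coe.mpr this
  exact key m.toNat this

lemma coker_aux {j : ℤ} (hj : 0 ≤ j) (htop : E.V j ⊔ LinearMap.range E.δ = ⊤) :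
    FiniteDimensional K (E.C ⧸ LinearMap.range E.δ)
    ∧ Module.finrank K (E.C ⧸ LinearMap.range E.δ)
        + Module.finrank K (LinearMap.range E.δ ⊓ E.V j : Submodule K E.C)
      = Module.finrank K (E.V j) := by
  have hfd : FiniteDimensional K (E.V j) := E.fd_V j
  set R := LinearMap.range E.δ with hR
  set ψ : E.V j →ₗ[K] E.C ⧸ R := R.mkQ ∘ₗ (E.V j).subtype with hψ
  have hrange : LinearMap.range ψ = ⊤ := by
    rw [hψ, LinearMap.range_comp, Submodule.range_subtype]
    have hmapR : Submodule.map R.mkQ R = ⊥ := by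
      rw [eq_bot_iff]
      rintro x ⟨y, hy, rfl⟩
      rw [Submodule.mem_bot, Submodule.mkQ_apply, Submodule.Quotient.mk_eq_zero]
      exact hy
    have h1 : (⊤ : Submodule K (E.C ⧸ R)) = Submodule.map R.mkQ ⊤ := by
      rw [Submodule.map_top, Submodule.range_mkQ]
    rw [eq_top_iff, h1, ← htop, Submodule.map_sup, hmapR, sup_bot_eq]
  have hsurj : Function.Surjective ψ := LinearMap.range_eq_top.mp hrange
  have hfdq : FiniteDimensional K (E.C ⧸ R) := Module.Finite.of_surjective ψ hsurj
  refine ⟨hfdq, ?_⟩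
  have hker : LinearMap.ker ψ = Submodule.comap (E.V j).subtype (R ⊓ E.V j) := by
    rw [hψ, LinearMap.ker_comp, Submodule.ker_mkQ]
    ext x
    simp only [Submodule.mem_comap, Submodule.mem_inf]
    exact ⟨fun h => ⟨h, x.2⟩, fun h => h.1⟩
  have hkerrank : Module.finrank K (LinearMap.ker ψ)
      = Module.finrank K (R ⊓ E.V j : Submodule K E.C) := by
    rw [hker]
    exact (Submodule.comapSubtypeEquivOfLe inf_le_right).finrank_eq
  have hrn := LinearMap.finrank_range_add_finrank_ker ψ
  rw [hrange, hkerrank] at hrn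
  rw [← hrn, finrank_top]


theorem main :
    FiniteDimensional K (LinearMap.ker E.δ)
    ∧ FiniteDimensional K (E.C ⧸ LinearMap.range E.δ)
    ∧ ((Module.finrank K (LinearMap.ker E.δ) : ℤ)
        - (Module.finrank K (E.C ⧸ LinearMap.range E.δ) : ℤ)) * E.g = -E.D
    ∧ (Module.finrank K (E.C ⧸ LinearMap.range E.δ) : ℤ) * E.g = E.D + E.g := by
  obtain ⟨d, hd⟩ := E.g_dvd_D
  obtain ⟨B, hB0, hB⟩ := E.exists_B
  set n₁ : ℕ := d.natAbs with hn₁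
  set n₂ : ℕ := (d.natAbs + d).toNat with hn₂def
  have hn2 : (n₂ : ℤ) = (n₁ : ℤ) + d := by omega
  have hi0 : (0:ℤ) ≤ (B + (n₁:ℤ)) * E.g := mul_nonneg (by positivity) E.hg.le
  have hj0 : (0:ℤ) ≤ (B + (n₂:ℤ)) * E.g := mul_nonneg (by positivity) E.hg.le
  have hij : ((B + (n₂:ℤ)) * E.g) = ((B + (n₁:ℤ)) * E.g) + E.D := by
    rw [hd, hn2]; ring
  have hr1 := E.rank_lin B hB0 hB n₁
  have hr2 := E.rank_lin B hB0 hB n₂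
  have hmap := E.map_V hij hi0
  have hrm := E.rank_map (i := (B + (n₁:ℤ)) * E.g) hi0
  have hclose : ∀ s ∈ E.S, (B + (n₂:ℤ)) * E.g < s → s - E.D ∈ E.S := by
    intro s hS hlt
    obtain ⟨m, hm⟩ := E.S_dvd hS
    have h1 : s - E.D = (m - d) * E.g := by rw [hd, hm]; ring
    rw [h1]
    apply hB
    have hn2' : d ≤ (n₂ : ℤ) := by omega
    have hm2 : B + (n₂:ℤ) < m := by nlinarith [E.hg]
    omega
  have htop := E.sup_top hj0 hclose
  obtain ⟨hfdq, hcok⟩ := E.coker_aux hj0 htop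
  rw [hmap] at hrm
  have hker := E.rank_ker
  have hx : ((Module.finrank K (E.C ⧸ LinearMap.range E.δ)) : ℤ) = d + 1 := by
    omega
  refine ⟨E.fd_ker, hfdq, ?_, ?_⟩
  · rw [hker, hx, hd]; ring
  · rw [hx, hd]; ring

end DegData
end DropAux



/-- **Theorem 2.2.(2) (Fredholmness and index).** Let `A` be a `K`-algebra that is a
domain with a degree function `v`, `C` a `K`-subalgebra of `A`, and `δ : C → C` a
`K`-linear map satisfying conditions (1)–(5) of the constant-drop theorem (hypotheses
`h1`–`h5` below, with drops stated in additive form). Let `D` be the common value of the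
drop `Δ_{δ,v}` on `C' = C ∖ K` (hypothesis `hD`) and let `g` be the unique positive
integer with `ℤ·v(C') = ℤg` (hypotheses `hg`, `hgZ`). Then `δ` is a Fredholm linear map
of `C`: its kernel and cokernel are finite dimensional, with index
`ind(δ) = dim ker(δ) − dim coker(δ) = −D/g` and `dim_K coker(δ) = D/g + 1` (both stated
multiplied through by `g` to avoid integer division). -/
theorem drop_fredholm (K A : Type*) [Field K] [Ring A] [IsDomain A] [Algebra K A]
    (v : A → WithBot ℤ)
    (hv0 : v 0 = ⊥)
    (hvmul : ∀ a b : A, a ≠ 0 → b ≠ 0 → v (a * b) = v a + v b)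
    (hvadd : ∀ a b : A, v (a + b) ≤ max (v a) (v b))
    (hvsc : ∀ k : K, k ≠ 0 → v (algebraMap K A k) = 0)
    (C : Subalgebra K A)
    (δ : C →ₗ[K] C)
    (h1 : ∀ a b : C,
      v (δ (a * b) : A) ≤ max (v (δ a : A) + v (b : A)) (v (δ b : A) + v (a : A)))
    (h2 : ∀ (a : C) (n : ℕ), 1 ≤ n →
      v (δ (a ^ n) : A) + v (a : A) = v (δ a : A) + v ((a : C) ^ n : A))
    (h3a : ∀ c : C, c ≠ 0 → 0 ≤ v (c : A))
    (h3b : {m : WithBot ℤ | ∃ c : C, c ∉ Set.range (algebraMap K C) ∧ v (c : A) = m}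
      ≠ {0})
    (h4 : ∀ (i : ℕ) (a b : C), v (a : A) ≤ ((i : ℤ) : WithBot ℤ) →
      v (b : A) ≤ ((i : ℤ) : WithBot ℤ) →
      ∃ k l : K, (k ≠ 0 ∨ l ≠ 0) ∧ v ((k • a + l • b : C) : A) < ((i : ℤ) : WithBot ℤ))
    (h5 : ∀ c : C, δ c = 0 ↔ c ∈ Set.range (algebraMap K C))
    (g : ℤ) (hg : 0 < g)
    (hgZ : AddSubgroup.closure
        {n : ℤ | ∃ c : C, c ∉ Set.range (algebraMap K C) ∧ v (c : A) = (n : WithBot ℤ)}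
      = AddSubgroup.zmultiples g)
    (D : ℤ)
    (hD : ∀ a : C, a ∉ Set.range (algebraMap K C) →
      v (δ a : A) = v (a : A) + (D : WithBot ℤ)) :
    FiniteDimensional K (LinearMap.ker δ)
    ∧ FiniteDimensional K (C ⧸ LinearMap.range δ)
    ∧ ((Module.finrank K (LinearMap.ker δ) : ℤ)
        - (Module.finrank K (C ⧸ LinearMap.range δ) : ℤ)) * g = -D
    ∧ (Module.finrank K (C ⧸ LinearMap.range δ) : ℤ) * g = D + g := by
  exact (DropAux.DegData.main ⟨v, C, δ, hv0, hvmul, hvadd, hvsc, h3a, h4, h5, g, hg, hgZ, D, hD⟩ :)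
end

section
/- Let A be a K-algebra that is a domain with degree function v and C a K-subalgebra of A, and let δ, δ' : C → C be two K-linear maps each satisfying conditions (1)–(5): (1) Δ(ab) ≤ max{Δ(a), Δ(b)} for all a,b ∈ C; (2) Δ(aⁿ) = Δ(a) for all a ∈ C and n ≥ 1; (3) v(c) ≥ 0 for all nonzero c ∈ C and v((C∖K)∖{0}) ≠ {0}; (4) dim_K(C_{≤i}/C_{≤i−1}) ≤ 1 for all i ≥ 0, where C_{≤i} := {c ∈ C : v(c) ≤ i}; (5) the kernel of the map equals K (here Δ denotes the drop of the respective map). Then the drops are additive: for all a ∈ C∖ker(δδ'), v(δδ'(a)) = v(a) + Δ_{δ,v} + Δ_{δ',v}, where Δ_{δ,v} and Δ_{δ',v} denote the constant drops of δ and δ' on C∖K. -/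
/-- **Theorem 2.2.(4) (additivity of the drop).** Let `A` be a `K`-algebra that is a
domain with a degree function `v` and `C` a `K`-subalgebra of `A`, and let
`δ, δ' : C → C` be two `K`-linear maps, each satisfying conditions (1)–(5) of the
constant-drop theorem (hypotheses `h1`–`h5` for `δ` and `h1'`–`h5'` for `δ'`, with drops
stated in additive form). Let `D` and `D'` be the respective constant drops of `δ` and
`δ'` on `C' = C ∖ K` (hypotheses `hD`, `hD'`). Then the drops are additive:
`Δ_{δδ',v} = Δ_{δ,v} + Δ_{δ',v}`, i.e. for every `a ∈ C ∖ ker(δδ')`,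
`v(δ(δ'(a))) = v(a) + D + D'`. -/
theorem drop_additive (K A : Type*) [Field K] [Ring A] [IsDomain A] [Algebra K A]
    (v : A → WithBot ℤ)
    (hv0 : v 0 = ⊥)
    (hvmul : ∀ a b : A, a ≠ 0 → b ≠ 0 → v (a * b) = v a + v b)
    (hvadd : ∀ a b : A, v (a + b) ≤ max (v a) (v b))
    (hvsc : ∀ k : K, k ≠ 0 → v (algebraMap K A k) = 0)
    (C : Subalgebra K A)
    (δ δ' : C →ₗ[K] C)
    (h1 : ∀ a b : C,
      v (δ (a * b) : A) ≤ max (v (δ a : A) + v (b : A)) (v (δ b : A) + v (a : A)))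
    (h2 : ∀ (a : C) (n : ℕ), 1 ≤ n →
      v (δ (a ^ n) : A) + v (a : A) = v (δ a : A) + v ((a : C) ^ n : A))
    (h3a : ∀ c : C, c ≠ 0 → 0 ≤ v (c : A))
    (h3b : {m : WithBot ℤ | ∃ c : C, c ∉ Set.range (algebraMap K C) ∧ v (c : A) = m}
      ≠ {0})
    (h4 : ∀ (i : ℕ) (a b : C), v (a : A) ≤ ((i : ℤ) : WithBot ℤ) →
      v (b : A) ≤ ((i : ℤ) : WithBot ℤ) →
      ∃ k l : K, (k ≠ 0 ∨ l ≠ 0) ∧ v ((k • a + l • b : C) : A) < ((i : ℤ) : WithBot ℤ))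
    (h5 : ∀ c : C, δ c = 0 ↔ c ∈ Set.range (algebraMap K C))
    (h1' : ∀ a b : C,
      v (δ' (a * b) : A) ≤ max (v (δ' a : A) + v (b : A)) (v (δ' b : A) + v (a : A)))
    (h2' : ∀ (a : C) (n : ℕ), 1 ≤ n →
      v (δ' (a ^ n) : A) + v (a : A) = v (δ' a : A) + v ((a : C) ^ n : A))
    (h3a' : ∀ c : C, c ≠ 0 → 0 ≤ v (c : A))
    (h3b' : {m : WithBot ℤ | ∃ c : C, c ∉ Set.range (algebraMap K C) ∧ v (c : A) = m}
      ≠ {0})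
    (h4' : ∀ (i : ℕ) (a b : C), v (a : A) ≤ ((i : ℤ) : WithBot ℤ) →
      v (b : A) ≤ ((i : ℤ) : WithBot ℤ) →
      ∃ k l : K, (k ≠ 0 ∨ l ≠ 0) ∧ v ((k • a + l • b : C) : A) < ((i : ℤ) : WithBot ℤ))
    (h5' : ∀ c : C, δ' c = 0 ↔ c ∈ Set.range (algebraMap K C))
    (D D' : ℤ)
    (hD : ∀ a : C, a ∉ Set.range (algebraMap K C) →
      v (δ a : A) = v (a : A) + (D : WithBot ℤ))
    (hD' : ∀ a : C, a ∉ Set.range (algebraMap K C) →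
      v (δ' a : A) = v (a : A) + (D' : WithBot ℤ)) :
    ∀ a : C, δ (δ' a) ≠ 0 →
      v (δ (δ' a) : A) = v (a : A) + (D : WithBot ℤ) + (D' : WithBot ℤ) := by
  intro a ha
  have hna : a ∉ Set.range (algebraMap K C) := by
    intro h
    have : δ' a = 0 := (h5' a).mpr h
    apply ha
    rw [this, map_zero]
  have hnb : δ' a ∉ Set.range (algebraMap K C) := fun h => ha ((h5 (δ' a)).mpr h)
  rw [hD (δ' a) hnb, hD' a hna]
  rw [add_assoc, add_assoc, add_comm (D' : WithBot ℤ) (D : WithBot ℤ)]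
end

section
/- Suppose [y,x] = 1 for elements x, y of the first Weyl algebra A₁ over a field K of characteristic zero. Let d be one of the two maps a ↦ [y,a]x or a ↦ [x,a]y on A₁, and let v = v_{ρ,η} for a pair of integers (ρ,η) with ρ + η > 0. Then v(d(aⁿ)) = v(a^{n−1}·d(a)) and Δ_{d,v}(aⁿ) = Δ_{d,v}(a) for all elements a ∈ A₁∖ker(d) and all n ≥ 1. -/
def weylRel (K : Type*) [CommRing K] :
    FreeAlgebra K (Fin 2) → FreeAlgebra K (Fin 2) → Prop :=
  fun a b => a = FreeAlgebra.ι K 1 * FreeAlgebra.ι K 0 ∧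
    b = FreeAlgebra.ι K 0 * FreeAlgebra.ι K 1 + 1

/-- The first Weyl algebra `A₁ = K⟨X, Y | YX - XY = 1⟩` over `K`,
realized as the quotient of the free algebra on two generators `X, Y`
by the relation `Y * X = X * Y + 1`. -/
abbrev WeylAlgebra (K : Type*) [CommRing K] := RingQuot (weylRel K)

/-- The canonical generator `X` of the Weyl algebra. -/
noncomputable def WeylX (K : Type*) [CommRing K] : WeylAlgebra K :=
  RingQuot.mkAlgHom K (weylRel K) (FreeAlgebra.ι K 0)

/-- The canonical generator `Y` of the Weyl algebra. -/
noncomputable def WeylY (K : Type*) [CommRing K] : WeylAlgebra K :=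
  RingQuot.mkAlgHom K (weylRel K) (FreeAlgebra.ι K 1)

/-- The degree function `v_{ρ,η}` on the Weyl algebra: expand an element in the monomial
basis `{YⁱXʲ}` (given as `B`, with `B (i,j) = Yⁱ * Xʲ`) and take
`max {ρi + ηj | a_{ij} ≠ 0}`, with value `⊥ = −∞` on `0`. -/
noncomputable def wdeg {K : Type*} [Field K] (B : Module.Basis (ℕ × ℕ) K (WeylAlgebra K))
    (ρ η : ℤ) (a : WeylAlgebra K) : WithBot ℤ :=
  (B.repr a).support.sup fun p => ((ρ * p.1 + η * p.2 : ℤ) : WithBot ℤ)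

/-!
Write `d a = [w, a] z`. Expanding `[w, aⁿ] = ∑_{i + j = n - 1} aⁱ [w, a] aʲ` and
commuting each `[w, a]` past `aʲ` gives `d (aⁿ) = n • aⁿ⁻¹ d a + ∑ aⁱ [[w, a], aʲ] z`.
For `ρ + η > 0` the weighted degree `v` is additive on products and drops by at least
`ρ + η` on commutators, since normal-ordering only creates monomials of lower weight.
So the error sum has smaller degree than `n • aⁿ⁻¹ d a`, which is nonzero in characteristic
zero, and additivity turns `v (d (aⁿ)) = v (aⁿ⁻¹ d a)` into the statement about drops.
-/

open Finset

namespace WeylAlgebra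

variable {K : Type*} [CommRing K]

local notation "X" => WeylX K
local notation "Y" => WeylY K

theorem weylY_mul_weylX : Y * X = X * Y + 1 := by
  simpa [WeylX, WeylY] using RingQuot.mkAlgHom_rel K (s := weylRel K) ⟨rfl, rfl⟩

theorem weylX_mul_weylY : X * Y = Y * X - 1 :=
  eq_sub_of_add_eq weylY_mul_weylX.symm

theorem weylX_mul_weylY_pow_succ (k : ℕ) :
    X * Y ^ (k + 1) = Y ^ (k + 1) * X - (k + 1) • Y ^ k := by
  induction k with
  | zero => simp [weylY_mul_weylX]
  | succ k ih =>
    rw [pow_succ, ← mul_assoc, ih, sub_mul, mul_assoc, weylX_mul_weylY, smul_mul_assoc,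
      ← pow_succ, mul_sub, mul_one, ← mul_assoc, ← pow_succ, add_nsmul _ (k + 1), one_nsmul]
    abel

variable (K) in
/-- What normal-ordering a product of monomials of total bidegree `(m, n)` can produce besides
`Yᵐ Xⁿ`: every use of `XY = YX - 1` lowers the bidegree by `(1, 1)`, hence the weight
`ρ i + η j` by `ρ + η`. -/
def lowerMonomials (m n : ℕ) : Set (WeylAlgebra K) :=
  {u | ∃ i j t, 0 < t ∧ i + t = m ∧ j + t = n ∧ u = Y ^ i * X ^ j}

theorem weylX_mul_mem_span_lowerMonomials {m n : ℕ} {u : WeylAlgebra K}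
    (hu : u ∈ Submodule.span K (lowerMonomials K m n)) :
    X * u ∈ Submodule.span K (lowerMonomials K m (n + 1)) := by
  suffices lowerMonomials K m n ⊆
      (Submodule.span K (lowerMonomials K m (n + 1))).comap (LinearMap.mulLeft K X) from
    Submodule.span_le.2 this hu
  rintro _ ⟨i, j, t, ht, rfl, rfl, rfl⟩
  have hmem : ∀ i' j' t', 0 < t' → i' + t' = i + t → j' + t' = j + t + 1 →
      Y ^ i' * X ^ j' ∈ Submodule.span K (lowerMonomials K (i + t) (j + t + 1)) :=
    fun i' j' t' ht' hi hj => Submodule.subset_span ⟨i', j', t', ht', hi, hj, rfl⟩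
  simp only [SetLike.mem_coe, Submodule.mem_comap, LinearMap.mulLeft_apply]
  cases i with
  | zero => simpa [← pow_succ'] using hmem 0 (j + 1) t ht (by simp) (by omega)
  | succ i =>
    rw [← mul_assoc, weylX_mul_weylY_pow_succ, sub_mul, smul_mul_assoc, mul_assoc, ← pow_succ']
    exact sub_mem (hmem _ _ t ht rfl (by omega))
      (Submodule.smul_of_tower_mem _ _ (hmem i j (t + 1) t.succ_pos (by omega) (by omega)))

theorem weylX_pow_mul_weylY_pow_sub_mem (j k : ℕ) :
    X ^ j * Y ^ k - Y ^ k * X ^ j ∈ Submodule.span K (lowerMonomials K k j) := by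
  induction j with
  | zero => simp
  | succ j ih =>
    have hXY : X * Y ^ k * X ^ j - Y ^ k * X ^ (j + 1) ∈
        Submodule.span K (lowerMonomials K k (j + 1)) := by
      cases k with
      | zero => simp [pow_succ']
      | succ k =>
        rw [weylX_mul_weylY_pow_succ, sub_mul, mul_assoc, ← pow_succ', sub_sub_cancel_left,
          smul_mul_assoc]
        exact neg_mem (Submodule.smul_of_tower_mem _ _
          (Submodule.subset_span ⟨k, j, 1, one_pos, rfl, rfl, rfl⟩))
    have hsplit : X ^ (j + 1) * Y ^ k - Y ^ k * X ^ (j + 1) =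
        X * (X ^ j * Y ^ k - Y ^ k * X ^ j) + (X * Y ^ k * X ^ j - Y ^ k * X ^ (j + 1)) := by
      simp only [pow_succ', mul_sub, mul_assoc]
      abel
    rw [hsplit]
    exact add_mem (weylX_mul_mem_span_lowerMonomials ih) hXY

theorem monomial_mul_monomial_sub_mem (i j k l : ℕ) :
    (Y ^ i * X ^ j) * (Y ^ k * X ^ l) - Y ^ (i + k) * X ^ (j + l) ∈
      Submodule.span K (lowerMonomials K (i + k) (j + l)) := by
  have hsandwich : lowerMonomials K k j ⊆
      (Submodule.span K (lowerMonomials K (i + k) (j + l))).comap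
        (LinearMap.mulLeft K (Y ^ i) ∘ₗ LinearMap.mulRight K (X ^ l)) := by
    rintro _ ⟨i', j', t, ht, rfl, rfl, rfl⟩
    refine Submodule.subset_span ⟨i + i', j' + l, t, ht, by omega, by omega, ?_⟩
    simp only [LinearMap.coe_comp, Function.comp_apply, LinearMap.mulLeft_apply,
      LinearMap.mulRight_apply, pow_add, mul_assoc]
  have h := Submodule.span_le.2 hsandwich (weylX_pow_mul_weylY_pow_sub_mem j k)
  simp only [Submodule.mem_comap, LinearMap.coe_comp, Function.comp_apply,
    LinearMap.mulLeft_apply, LinearMap.mulRight_apply] at h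
  convert h using 1
  simp only [pow_add, mul_sub, sub_mul, mul_assoc]

end WeylAlgebra

theorem commutator_pow_succ_eq_sum {R : Type*} [Ring R] (w a : R) (m : ℕ) :
    w * a ^ (m + 1) - a ^ (m + 1) * w =
      ∑ x ∈ antidiagonal m, a ^ x.1 * (w * a - a * w) * a ^ x.2 := by
  induction m with
  | zero => simp
  | succ m ih =>
    have hstep : w * a ^ (m + 2) - a ^ (m + 2) * w =
        (w * a ^ (m + 1) - a ^ (m + 1) * w) * a + a ^ (m + 1) * (w * a - a * w) := by
      simp only [pow_succ, mul_sub, sub_mul, mul_assoc]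
      abel
    rw [hstep, ih, Finset.Nat.sum_antidiagonal_succ', Finset.sum_mul, add_comm]
    simp only [pow_zero, mul_one, pow_succ, mul_assoc]

theorem commutator_pow_succ_eq {R : Type*} [Ring R] (w a : R) (m : ℕ) :
    w * a ^ (m + 1) - a ^ (m + 1) * w = (m + 1) • (a ^ m * (w * a - a * w)) +
      ∑ x ∈ antidiagonal m,
        a ^ x.1 * ((w * a - a * w) * a ^ x.2 - a ^ x.2 * (w * a - a * w)) := by
  rw [commutator_pow_succ_eq_sum, ← Finset.Nat.card_antidiagonal m, ← Finset.sum_const,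
    ← Finset.sum_add_distrib]
  refine Finset.sum_congr rfl fun x hx => ?_
  rw [← mem_antidiagonal.1 hx, pow_add]
  simp only [mul_sub, sub_mul, mul_assoc]
  abel

section WeightedDegree

open WeylAlgebra

variable {K : Type*} [Field K] (B : Module.Basis (ℕ × ℕ) K (WeylAlgebra K)) (ρ η : ℤ)

def monomialWeight (ρ η : ℤ) (p : ℕ × ℕ) : ℤ := ρ * p.1 + η * p.2

theorem le_wdeg {a : WeylAlgebra K} {p : ℕ × ℕ} (hp : p ∈ (B.repr a).support) :
    (monomialWeight ρ η p : WithBot ℤ) ≤ wdeg B ρ η a :=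
  Finset.le_sup (f := fun p : ℕ × ℕ => ((ρ * p.1 + η * p.2 : ℤ) : WithBot ℤ)) hp

theorem wdeg_le_iff {a : WeylAlgebra K} {c : WithBot ℤ} :
    wdeg B ρ η a ≤ c ↔
      ∀ p ∈ (B.repr a).support, (monomialWeight ρ η p : WithBot ℤ) ≤ c :=
  Finset.sup_le_iff

theorem wdeg_zero : wdeg B ρ η 0 = ⊥ := by
  simp [wdeg]

theorem wdeg_neg (a : WeylAlgebra K) : wdeg B ρ η (-a) = wdeg B ρ η a := by
  simp only [wdeg, map_neg, Finsupp.support_neg]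

theorem wdeg_smul {c : K} (hc : c ≠ 0) (a : WeylAlgebra K) :
    wdeg B ρ η (c • a) = wdeg B ρ η a := by
  simp only [wdeg, map_smul, Finsupp.support_smul_eq hc]

theorem wdeg_smul_le (c : K) (a : WeylAlgebra K) : wdeg B ρ η (c • a) ≤ wdeg B ρ η a := by
  rcases eq_or_ne c 0 with rfl | hc
  · simp [wdeg_zero]
  · exact (wdeg_smul B ρ η hc a).le

theorem wdeg_add_le (a b : WeylAlgebra K) :
    wdeg B ρ η (a + b) ≤ max (wdeg B ρ η a) (wdeg B ρ η b) := by
  refine (wdeg_le_iff B ρ η).2 fun p hp => ?_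
  rw [map_add] at hp
  rcases Finset.mem_union.1 (Finsupp.support_add hp) with h | h
  · exact le_max_of_le_left (le_wdeg B ρ η h)
  · exact le_max_of_le_right (le_wdeg B ρ η h)

theorem wdeg_add_eq_left_of_lt {a b : WeylAlgebra K} (h : wdeg B ρ η b < wdeg B ρ η a) :
    wdeg B ρ η (a + b) = wdeg B ρ η a := by
  refine le_antisymm ((wdeg_add_le B ρ η a b).trans (max_le le_rfl h.le)) ?_
  have hle := wdeg_add_le B ρ η (a + b) (-b)
  rw [add_neg_cancel_right, wdeg_neg] at hle
  exact (le_max_iff.1 hle).resolve_right h.not_ge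

theorem wdeg_basis (p : ℕ × ℕ) : wdeg B ρ η (B p) = monomialWeight ρ η p := by
  simp [wdeg, monomialWeight]

def wdegFiltration (c : WithBot ℤ) : Submodule K (WeylAlgebra K) where
  carrier := {u | wdeg B ρ η u ≤ c}
  add_mem' ha hb := (wdeg_add_le B ρ η _ _).trans (max_le ha hb)
  zero_mem' := by simp [wdeg_zero]
  smul_mem' c u hu := (wdeg_smul_le B ρ η c u).trans hu

@[simp]
theorem mem_wdegFiltration {c : WithBot ℤ} {u : WeylAlgebra K} :
    u ∈ wdegFiltration B ρ η c ↔ wdeg B ρ η u ≤ c :=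
  Iff.rfl

theorem wdeg_bilin_le (f : WeylAlgebra K →ₗ[K] WeylAlgebra K →ₗ[K] WeylAlgebra K) (k : ℤ)
    (hf : ∀ p q,
      wdeg B ρ η (f (B p) (B q)) ≤ ↑(monomialWeight ρ η p + monomialWeight ρ η q - k))
    {a b : WeylAlgebra K} {s t : ℤ} (ha : wdeg B ρ η a ≤ s) (hb : wdeg B ρ η b ≤ t) :
    wdeg B ρ η (f a b) ≤ ↑(s + t - k) := by
  rw [← LinearMap.sum_repr_mul_repr_mul B B (B := f) a b, ← mem_wdegFiltration]
  refine Submodule.sum_mem _ fun p hp => Submodule.sum_mem _ fun q hq =>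
    Submodule.smul_mem _ _ (Submodule.smul_mem _ _ ((hf p q).trans (WithBot.coe_le_coe.2 ?_)))
  have hps := WithBot.coe_le_coe.1 ((le_wdeg B ρ η hp).trans ha)
  have hqt := WithBot.coe_le_coe.1 ((le_wdeg B ρ η hq).trans hb)
  linarith

theorem wdeg_eq_coe {a : WeylAlgebra K} (ha : a ≠ 0) : ∃ s : ℤ, wdeg B ρ η a = s := by
  obtain ⟨p, -, hp⟩ := Finset.exists_mem_eq_sup (B.repr a).support
    (Finsupp.support_nonempty_iff.2 (by simpa using ha))
    fun p => (monomialWeight ρ η p : WithBot ℤ)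
  exact ⟨_, hp⟩

/-- A total refinement of the weight order: the key-maximal monomials of two factors are the
only pair of monomials producing their sum, so the corresponding coefficient of the product is
a product of nonzero coefficients. -/
def leadingKey (ρ η : ℤ) (p : ℕ × ℕ) : ℤ ×ₗ (ℕ ×ₗ ℕ) :=
  toLex (monomialWeight ρ η p, toLex p)

theorem leadingKey_add (p q : ℕ × ℕ) :
    leadingKey ρ η (p + q) = leadingKey ρ η p + leadingKey ρ η q := by
  change _ = toLex ((monomialWeight ρ η p, toLex p) + (monomialWeight ρ η q, toLex q))
  simp only [leadingKey, monomialWeight, Prod.mk_add_mk, Prod.fst_add, Prod.snd_add, Nat.cast_add]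
  congr 2
  ring

theorem leadingKey_injective : Function.Injective (leadingKey ρ η) := fun p q h => by
  simpa [leadingKey] using congrArg (fun x => ofLex (ofLex x).2) h

theorem eq_and_eq_of_leadingKey_le {p q p' q' : ℕ × ℕ}
    (hp : leadingKey ρ η p ≤ leadingKey ρ η p') (hq : leadingKey ρ η q ≤ leadingKey ρ η q')
    (h : p + q = p' + q') : p = p' ∧ q = q' := by
  rw [← (leadingKey_injective ρ η).eq_iff, ← (leadingKey_injective ρ η).eq_iff,
    ← add_eq_add_iff_eq_and_eq hp hq, ← leadingKey_add, ← leadingKey_add, h]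

theorem exists_leadingKey_max {a : WeylAlgebra K} (ha : a ≠ 0) :
    ∃ p ∈ (B.repr a).support, wdeg B ρ η a = monomialWeight ρ η p ∧
      ∀ q ∈ (B.repr a).support, leadingKey ρ η q ≤ leadingKey ρ η p := by
  obtain ⟨p, hp, hmax⟩ := (B.repr a).support.exists_max_image (leadingKey ρ η)
    (Finsupp.support_nonempty_iff.2 (by simpa using ha))
  refine ⟨p, hp, le_antisymm ((wdeg_le_iff B ρ η).2 fun q hq => ?_) (le_wdeg B ρ η hp),
    hmax⟩
  exact WithBot.coe_le_coe.2 (Prod.Lex.monotone_fst _ _ (hmax q hq))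

variable {B} (hB : ∀ i j : ℕ, B (i, j) = WeylY K ^ i * WeylX K ^ j)
include hB

theorem wdeg_le_of_mem_span_lowerMonomials (hρη : 0 ≤ ρ + η) {m n : ℕ} {u : WeylAlgebra K}
    (hu : u ∈ Submodule.span K (lowerMonomials K m n)) :
    wdeg B ρ η u ≤ ↑(monomialWeight ρ η (m, n) - (ρ + η)) := by
  rw [← mem_wdegFiltration]
  refine Submodule.span_le.2 ?_ hu
  rintro _ ⟨i, j, t, ht, rfl, rfl, rfl⟩
  rw [SetLike.mem_coe, mem_wdegFiltration, ← hB, wdeg_basis B ρ η, WithBot.coe_le_coe]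
  simp only [monomialWeight, Nat.cast_add]
  nlinarith [(Int.ofNat_lt.2 ht : (0 : ℤ) < t)]

theorem basis_mul_basis_sub_mem (p q : ℕ × ℕ) :
    B p * B q - B (p + q) ∈ Submodule.span K (lowerMonomials K (p + q).1 (p + q).2) := by
  rcases p with ⟨i, j⟩
  rcases q with ⟨k, l⟩
  simpa only [← hB, Prod.mk_add_mk] using monomial_mul_monomial_sub_mem (K := K) i j k l

theorem wdeg_mul_le_of_le (hρη : 0 ≤ ρ + η) {a b : WeylAlgebra K} {s t : ℤ}
    (ha : wdeg B ρ η a ≤ s) (hb : wdeg B ρ η b ≤ t) : wdeg B ρ η (a * b) ≤ ↑(s + t) := by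
  refine sub_zero (s + t) ▸
    wdeg_bilin_le B ρ η (LinearMap.mul K (WeylAlgebra K)) 0 (fun p q => ?_) ha hb
  rw [LinearMap.mul_apply', ← sub_add_cancel (B p * B q) (B (p + q))]
  refine (wdeg_add_le B ρ η _ _).trans (max_le ?_ ?_)
  · refine (wdeg_le_of_mem_span_lowerMonomials ρ η hB hρη
      (basis_mul_basis_sub_mem hB p q)).trans ?_
    simp only [monomialWeight, Prod.fst_add, Prod.snd_add, Nat.cast_add, WithBot.coe_le_coe]
    linarith
  · rw [wdeg_basis B ρ η, WithBot.coe_le_coe]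
    simp only [monomialWeight, Prod.fst_add, Prod.snd_add, Nat.cast_add]
    linarith

theorem wdeg_commutator_le (hρη : 0 ≤ ρ + η) {a b : WeylAlgebra K} {s t : ℤ}
    (ha : wdeg B ρ η a ≤ s) (hb : wdeg B ρ η b ≤ t) :
    wdeg B ρ η (a * b - b * a) ≤ ↑(s + t - (ρ + η)) := by
  let commutator : WeylAlgebra K →ₗ[K] WeylAlgebra K →ₗ[K] WeylAlgebra K :=
    LinearMap.mk₂ K (fun a b => a * b - b * a)
      (fun _ _ _ => by simp only [add_mul, mul_add]; abel)
      (fun _ _ _ => by simp only [smul_mul_assoc, mul_smul_comm, smul_sub])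
      (fun _ _ _ => by simp only [add_mul, mul_add]; abel)
      (fun _ _ _ => by simp only [smul_mul_assoc, mul_smul_comm, smul_sub])
  refine wdeg_bilin_le B ρ η commutator (ρ + η) (fun p q => ?_) ha hb
  have hpq := basis_mul_basis_sub_mem hB p q
  have hqp := basis_mul_basis_sub_mem hB q p
  rw [add_comm q p] at hqp
  rw [LinearMap.mk₂_apply, ← sub_sub_sub_cancel_right (B p * B q) (B q * B p) (B (p + q))]
  refine (wdeg_le_of_mem_span_lowerMonomials ρ η hB hρη (sub_mem hpq hqp)).trans (le_of_eq ?_)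
  simp only [monomialWeight, Prod.fst_add, Prod.snd_add, Nat.cast_add]
  ring_nf

theorem repr_basis_mul_basis_apply (hρη : 0 < ρ + η) {p q r : ℕ × ℕ}
    (h : monomialWeight ρ η p + monomialWeight ρ η q ≤ monomialWeight ρ η r) :
    B.repr (B p * B q) r = if p + q = r then 1 else 0 := by
  have hlow : B.repr (B p * B q - B (p + q)) r = 0 := by
    by_contra hne
    have hle := (le_wdeg B ρ η (Finsupp.mem_support_iff.2 hne)).trans
      (wdeg_le_of_mem_span_lowerMonomials ρ η hB hρη.le (basis_mul_basis_sub_mem hB p q))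
    simp only [monomialWeight, Prod.fst_add, Prod.snd_add, Nat.cast_add, WithBot.coe_le_coe]
      at hle h
    linarith
  rwa [map_sub, Finsupp.sub_apply, sub_eq_zero, B.repr_self, Finsupp.single_apply] at hlow

theorem wdeg_mul (hρη : 0 < ρ + η) {a b : WeylAlgebra K} (ha : a ≠ 0) (hb : b ≠ 0) :
    wdeg B ρ η (a * b) = wdeg B ρ η a + wdeg B ρ η b := by
  obtain ⟨pa, hpa, hwa, hmaxa⟩ := exists_leadingKey_max B ρ η ha
  obtain ⟨pb, hpb, hwb, hmaxb⟩ := exists_leadingKey_max B ρ η hb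
  have hcoeff : B.repr (a * b) (pa + pb) = B.repr a pa * B.repr b pb := by
    rw [← LinearMap.mul_apply' (R := K) a b, ← LinearMap.sum_repr_mul_repr_mul B B]
    simp only [Finsupp.sum, map_sum, map_smul, Finsupp.finsetSum_apply, Finsupp.smul_apply,
      LinearMap.mul_apply', smul_eq_mul, ← Finset.sum_product']
    have hweight : ∀ p ∈ (B.repr a).support, ∀ q ∈ (B.repr b).support,
        monomialWeight ρ η p + monomialWeight ρ η q ≤ monomialWeight ρ η (pa + pb) := by
      intro p hp q hq
      have hp' := WithBot.coe_le_coe.1 ((le_wdeg B ρ η hp).trans hwa.le)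
      have hq' := WithBot.coe_le_coe.1 ((le_wdeg B ρ η hq).trans hwb.le)
      simp only [monomialWeight, Prod.fst_add, Prod.snd_add, Nat.cast_add] at hp' hq' ⊢
      linarith
    rw [Finset.sum_eq_single_of_mem (pa, pb) (Finset.mem_product.2 ⟨hpa, hpb⟩)]
    · rw [repr_basis_mul_basis_apply ρ η hB hρη (hweight pa hpa pb hpb), if_pos rfl, mul_one]
    · rintro ⟨p, q⟩ hpq hne
      obtain ⟨hp, hq⟩ := Finset.mem_product.1 hpq
      rw [repr_basis_mul_basis_apply ρ η hB hρη (hweight p hp q hq), if_neg, mul_zero, mul_zero]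
      exact fun h => hne (Prod.ext_iff.2
        (eq_and_eq_of_leadingKey_le ρ η (hmaxa p hp) (hmaxb q hq) h))
  rw [hwa, hwb, ← WithBot.coe_add]
  refine le_antisymm (wdeg_mul_le_of_le ρ η hB hρη.le hwa.le hwb.le) ?_
  have hne : B.repr (a * b) (pa + pb) ≠ 0 := by
    rw [hcoeff]
    exact mul_ne_zero (Finsupp.mem_support_iff.1 hpa) (Finsupp.mem_support_iff.1 hpb)
  simpa [monomialWeight, add_mul, mul_add, add_add_add_comm] using
    le_wdeg B ρ η (Finsupp.mem_support_iff.2 hne)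

theorem noZeroDivisors_of_basis : NoZeroDivisors (WeylAlgebra K) where
  eq_zero_or_eq_zero_of_mul_eq_zero {a b} hab := by
    by_contra! h
    obtain ⟨s, hs⟩ := wdeg_eq_coe B 1 1 h.1
    obtain ⟨t, ht⟩ := wdeg_eq_coe B 1 1 h.2
    have hmul := wdeg_mul 1 1 hB two_pos h.1 h.2
    rw [hab, wdeg_zero, hs, ht, ← WithBot.coe_add] at hmul
    exact WithBot.bot_ne_coe hmul

theorem wdeg_pow_mul_add_wdeg (hρη : 0 < ρ + η) {a c : WeylAlgebra K} (ha : a ≠ 0)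
    (hc : c ≠ 0) (m : ℕ) :
    wdeg B ρ η (a ^ m * c) + wdeg B ρ η a = wdeg B ρ η c + wdeg B ρ η (a ^ (m + 1)) := by
  have := noZeroDivisors_of_basis hB
  rw [pow_succ, wdeg_mul ρ η hB hρη (pow_ne_zero m ha) hc,
    wdeg_mul ρ η hB hρη (pow_ne_zero m ha) ha]
  abel

theorem wdeg_sum_pow_mul_commutator_mul_lt (hρη : 0 < ρ + η) {a c z : WeylAlgebra K}
    (ha : a ≠ 0) (hc : c ≠ 0) (hz : z ≠ 0) (m : ℕ) :
    wdeg B ρ η (∑ x ∈ antidiagonal m, a ^ x.1 * (c * a ^ x.2 - a ^ x.2 * c) * z) <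
      wdeg B ρ η (a ^ m * (c * z)) := by
  have := noZeroDivisors_of_basis hB
  obtain ⟨γ, hγ⟩ := wdeg_eq_coe B ρ η hc
  obtain ⟨ζ, hζ⟩ := wdeg_eq_coe B ρ η hz
  choose α hα using fun i => wdeg_eq_coe B ρ η (pow_ne_zero i ha)
  have hlead : wdeg B ρ η (a ^ m * (c * z)) = ↑(α m + γ + ζ) := by
    rw [wdeg_mul ρ η hB hρη (pow_ne_zero m ha) (mul_ne_zero hc hz), wdeg_mul ρ η hB hρη hc hz,
      hα, hγ, hζ]
    norm_cast
    ring
  rw [hlead]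
  refine lt_of_le_of_lt (b := ↑(α m + γ + ζ - (ρ + η))) ?_
    (WithBot.coe_lt_coe.2 (by linarith))
  refine (wdegFiltration B ρ η _).sum_mem fun x hx => ?_
  have hsum : α x.1 + α x.2 = α m := by
    have hpow := wdeg_mul ρ η hB hρη (pow_ne_zero x.1 ha) (pow_ne_zero x.2 ha)
    rw [← pow_add, mem_antidiagonal.1 hx, hα, hα, hα, ← WithBot.coe_add] at hpow
    exact (WithBot.coe_inj.1 hpow).symm
  refine (wdeg_mul_le_of_le ρ η hB hρη.le (wdeg_mul_le_of_le ρ η hB hρη.le (hα x.1).le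
    (wdeg_commutator_le ρ η hB hρη.le hγ.le (hα x.2).le)) hζ.le).trans
    (WithBot.coe_le_coe.2 (by linarith))

theorem wdeg_commutator_pow_succ_mul [CharZero K] (hρη : 0 < ρ + η) {w z a : WeylAlgebra K}
    (h : (w * a - a * w) * z ≠ 0) (m : ℕ) :
    wdeg B ρ η ((w * a ^ (m + 1) - a ^ (m + 1) * w) * z) =
      wdeg B ρ η (a ^ m * ((w * a - a * w) * z)) := by
  set c := w * a - a * w
  have hc : c ≠ 0 := left_ne_zero_of_mul h
  have ha : a ≠ 0 := by
    rintro rfl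
    simp [c] at hc
  have hscale : wdeg B ρ η (((m + 1 : ℕ) : K) • (a ^ m * (c * z))) =
      wdeg B ρ η (a ^ m * (c * z)) :=
    wdeg_smul B ρ η (Nat.cast_ne_zero.2 m.succ_ne_zero) _
  have herror := wdeg_sum_pow_mul_commutator_mul_lt ρ η hB hρη ha hc (right_ne_zero_of_mul h) m
  rw [commutator_pow_succ_eq, add_mul, smul_mul_assoc, Finset.sum_mul, mul_assoc,
    ← Nat.cast_smul_eq_nsmul K, wdeg_add_eq_left_of_lt B ρ η (hscale ▸ herror), hscale]

end WeightedDegree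

theorem drop_eq_on_powers_general (K : Type*) [Field K] [CharZero K]
    (B : Module.Basis (ℕ × ℕ) K (WeylAlgebra K))
    (hB : ∀ i j : ℕ, B (i, j) = WeylY K ^ i * WeylX K ^ j)
    (x y : WeylAlgebra K)
    (ρ η : ℤ) (hρη : 0 < ρ + η)
    (d : WeylAlgebra K → WeylAlgebra K)
    (hd : d = (fun a => (y * a - a * y) * x) ∨ d = (fun a => (x * a - a * x) * y))
    (a : WeylAlgebra K) (ha : d a ≠ 0) (n : ℕ) (hn : 1 ≤ n) :
    wdeg B ρ η (d (a ^ n)) = wdeg B ρ η (a ^ (n - 1) * d a)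
    ∧ wdeg B ρ η (d (a ^ n)) + wdeg B ρ η a
        = wdeg B ρ η (d a) + wdeg B ρ η (a ^ n) := by
  obtain ⟨m, rfl⟩ : ∃ m, n = m + 1 := ⟨n - 1, by omega⟩
  obtain ⟨w, z, rfl⟩ : ∃ w z, d = fun a => (w * a - a * w) * z := by
    rcases hd with rfl | rfl
    exacts [⟨y, x, rfl⟩, ⟨x, y, rfl⟩]
  have ha0 : a ≠ 0 := by
    rintro rfl
    simp at ha
  have hpow : wdeg B ρ η ((w * a ^ (m + 1) - a ^ (m + 1) * w) * z) =
      wdeg B ρ η (a ^ m * ((w * a - a * w) * z)) :=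
    wdeg_commutator_pow_succ_mul ρ η hB hρη ha m
  rw [Nat.add_sub_cancel]
  exact ⟨hpow, hpow ▸ wdeg_pow_mul_add_wdeg ρ η hB hρη ha0 ha m⟩

/-- **Lemma 3.1.** Suppose `[y,x] = 1` for elements `x, y` of the Weyl algebra `A₁` over
a field `K` of characteristic zero. Let `d` be one of the maps `a ↦ [y,a]x`,
`a ↦ [x,a]y`, and let `v = v_{ρ,η}` for integers `(ρ,η)` with `ρ + η > 0` (the basis `B`
realizes the monomial basis `{YⁱXʲ}` of `A₁` in which `v_{ρ,η}` is computed). Then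
`v(d(aⁿ)) = v(a^{n−1}·d(a))` and `Δ_{d,v}(aⁿ) = Δ_{d,v}(a)` (the latter stated in the
equivalent additive form `v(d(aⁿ)) + v(a) = v(d(a)) + v(aⁿ)`) for all `a ∈ A₁ ∖ ker d`
and all `n ≥ 1`. -/
theorem drop_eq_on_powers (K : Type*) [Field K] [CharZero K]
    (B : Module.Basis (ℕ × ℕ) K (WeylAlgebra K))
    (hB : ∀ i j : ℕ, B (i, j) = WeylY K ^ i * WeylX K ^ j)
    (x y : WeylAlgebra K) (hxy : y * x - x * y = 1)
    (ρ η : ℤ) (hρη : 0 < ρ + η)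
    (d : WeylAlgebra K → WeylAlgebra K)
    (hd : d = (fun a => (y * a - a * y) * x) ∨ d = (fun a => (x * a - a * x) * y))
    (a : WeylAlgebra K) (ha : d a ≠ 0) (n : ℕ) (hn : 1 ≤ n) :
    wdeg B ρ η (d (a ^ n)) = wdeg B ρ η (a ^ (n - 1) * d a)
    ∧ wdeg B ρ η (d (a ^ n)) + wdeg B ρ η a
        = wdeg B ρ η (d a) + wdeg B ρ η (a ^ n) :=
  drop_eq_on_powers_general K B hB x y ρ η hρη d hd a ha n hn
end
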